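/- arXiv:1209.3828 — 12 statements merged into one kernel-verified Lean document; each statement's English description precedes it below -/
import Mathlib

section
/- Let q be a prime power, ℓ a divisor of q-1, s=(q-1)/ℓ, γ a primitive element of F_q, and C_i = γ^i·C_0 where C_0 is the subgroup of ℓ-th powers in F_q*. For A_0,...,A_{ℓ-1} ∈ F_q* and positive integers r_0,...,r_{ℓ-1}, the map P sending 0 to 0 and x ∈ C_i to A_i·x^{r_i} is a bijection of F_q if and only if gcd(r_i, s)=1 for all i and the set {A_i^s · ζ^{i·r_i} : i = 0,...,ℓ-1} equals the set μ_ℓ of all ℓ-th roots of unity in F_q, where ζ = γ^s. -/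
/-!
Since `x ^ s = ζ ^ i` on the coset `C_i`, we get `P x ^ s = A_i ^ s ζ ^ (i r_i)` there: `P` maps
`C_i` into the coset indexed by `A_i ^ s ζ ^ (i r_i) ∈ μ_ℓ`. So `P` is injective iff each
`x ↦ A_i x ^ r_i` is injective on `C_i` and the `ℓ` values `A_i ^ s ζ ^ (i r_i)` are distinct, i.e.
exhaust `μ_ℓ`. If a prime `p` divides `gcd (r_i, s)`, Cauchy's theorem gives `w ≠ 1` of order `p`,
and `x`, `x w` collide; if `gcd (r_i, s) = 1`, then `x ^ s = y ^ s` and `x ^ r_i = y ^ r_i`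
force `x = y`.
-/

open Function

lemma IsPrimitiveRoot.of_forall_exists_pow_eq {F : Type*} [Field F] [Fintype F] {γ : F}
    (hγ0 : γ ≠ 0) (hγ : ∀ x : F, x ≠ 0 → ∃ k : ℕ, γ ^ k = x) :
    IsPrimitiveRoot γ (Fintype.card F - 1) := by
  lift γ to Fˣ using hγ0.isUnit
  rw [IsPrimitiveRoot.iff_orderOf, orderOf_units, orderOf_eq_card_of_forall_mem_zpowers,
    Nat.card_units, Nat.card_eq_fintype_card]
  intro x
  obtain ⟨k, hk⟩ := hγ x x.ne_zero
  exact ⟨k, Units.ext (by simpa using hk)⟩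

lemma exists_ne_one_pow_eq_one_of_not_coprime {G : Type*} [Group G] [Finite G] {r s : ℕ}
    (hs : s ∣ Nat.card G) (hrs : ¬ r.Coprime s) :
    ∃ w : G, w ≠ 1 ∧ w ^ r = 1 ∧ w ^ s = 1 := by
  have hp : Fact (r.gcd s).minFac.Prime := ⟨Nat.minFac_prime hrs⟩
  obtain ⟨w, hw⟩ := exists_prime_orderOf_dvd_card' (r.gcd s).minFac
    ((Nat.minFac_dvd _).trans ((Nat.gcd_dvd_right r s).trans hs))
  refine ⟨w, fun h => hp.out.one_lt.ne' (by rw [← hw, h, orderOf_one]), pow_gcd_eq_one.mp ?_⟩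
  exact orderOf_dvd_iff_pow_eq_one.mp (hw ▸ Nat.minFac_dvd _)

lemma eq_of_pow_eq_of_coprime {G₀ : Type*} [CommGroupWithZero G₀] {x y : G₀} {r s : ℕ}
    (hy : y ≠ 0) (hrs : r.Coprime s) (hr : x ^ r = y ^ r) (hs : x ^ s = y ^ s) : x = y := by
  have hy' (n : ℕ) : y ^ n / y ^ n = 1 := div_self (pow_ne_zero n hy)
  rw [← div_eq_one_iff_eq hy, ← pow_eq_one_iff_of_coprime hrs, div_pow, div_pow, hr, hs]
  exact ⟨hy' r, hy' s⟩

lemma injOn_range_of_setOf_eq_setOf_pow_eq_one {R : Type*} [CommRing R] [IsDomain R]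
    {ℓ : ℕ} {ζ : R} (hζ : IsPrimitiveRoot ζ ℓ) (hℓ : 0 < ℓ) {f : ℕ → R}
    (hf : {z : R | ∃ i < ℓ, z = f i} = {z : R | z ^ ℓ = 1}) :
    Set.InjOn f (Finset.range ℓ) := by
  classical
  have himage : (Finset.range ℓ).image f = Polynomial.nthRootsFinset ℓ (1 : R) := by
    ext z
    simpa [hℓ, eq_comm] using Set.ext_iff.mp hf z
  apply Finset.injOn_of_card_image_eq
  rw [himage, hζ.card_nthRootsFinset, Finset.card_range]

/-- For `x ≠ 0`, `x ^ s = (γ ^ s) ^ i` is membership of `x` in the coset `C_i`. -/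
def IsCyclotomicMap {F : Type*} [Field F] (ℓ s : ℕ) (γ : F) (A : ℕ → F) (r : ℕ → ℕ)
    (P : F → F) : Prop :=
  ∀ i < ℓ, ∀ x : F, x ≠ 0 → x ^ s = (γ ^ s) ^ i → P x = A i * x ^ (r i)

section CyclotomicMap

variable {F : Type*} [Field F] {ℓ s : ℕ} {γ : F} {A : ℕ → F} {r : ℕ → ℕ} {P : F → F}

lemma IsCyclotomicMap.pow_apply_eq (hP : IsCyclotomicMap ℓ s γ A r P) {i : ℕ} (hi : i < ℓ)
    {x : F} (hx : x ≠ 0) (hxs : x ^ s = (γ ^ s) ^ i) :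
    P x ^ s = A i ^ s * (γ ^ s) ^ (i * r i) := by
  rw [hP i hi x hx hxs, mul_pow, pow_right_comm, hxs, ← pow_mul]

variable [Fintype F]

lemma ne_zero_of_mul_eq_card_sub_one (hsℓ : s * ℓ = Fintype.card F - 1) : ℓ ≠ 0 :=
  right_ne_zero_of_mul (hsℓ ▸ (Nat.sub_pos_of_lt Fintype.one_lt_card).ne')

lemma pow_pow_eq_one_of_mul_eq_card_sub_one (hsℓ : s * ℓ = Fintype.card F - 1) {x : F}
    (hx : x ≠ 0) : (x ^ s) ^ ℓ = 1 := by
  rw [← pow_mul, hsℓ, FiniteField.pow_card_sub_one_eq_one x hx]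

lemma isPrimitiveRoot_pow_of_mul_eq_card_sub_one (hγ : IsPrimitiveRoot γ (Fintype.card F - 1))
    (hsℓ : s * ℓ = Fintype.card F - 1) : IsPrimitiveRoot (γ ^ s) ℓ :=
  hγ.pow (Nat.sub_pos_of_lt Fintype.one_lt_card) hsℓ.symm

lemma exists_pow_eq_pow_pow (hγ : IsPrimitiveRoot γ (Fintype.card F - 1))
    (hsℓ : s * ℓ = Fintype.card F - 1) {x : F} (hx : x ≠ 0) :
    ∃ i < ℓ, x ^ s = (γ ^ s) ^ i := by
  have : NeZero ℓ := ⟨ne_zero_of_mul_eq_card_sub_one hsℓ⟩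
  obtain ⟨i, hi, h⟩ := (isPrimitiveRoot_pow_of_mul_eq_card_sub_one hγ hsℓ).eq_pow_of_pow_eq_one
    (pow_pow_eq_one_of_mul_eq_card_sub_one hsℓ hx)
  exact ⟨i, hi, h.symm⟩

lemma IsCyclotomicMap.coprime_of_injective (hP : IsCyclotomicMap ℓ s γ A r P) (hγ0 : γ ≠ 0)
    (hs : s ∣ Fintype.card F - 1) (hinj : Injective P) {i : ℕ} (hi : i < ℓ) :
    (r i).Coprime s := by
  by_contra hrs
  obtain ⟨w, hw1, hwr, hws⟩ := exists_ne_one_pow_eq_one_of_not_coprime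
    (G := Fˣ) (by rwa [Nat.card_units, Nat.card_eq_fintype_card]) hrs
  have hx : γ ^ i ≠ 0 := pow_ne_zero i hγ0
  have hxs : (γ ^ i) ^ s = (γ ^ s) ^ i := pow_right_comm γ i s
  have hxws : (γ ^ i * w) ^ s = (γ ^ s) ^ i := by
    rw [mul_pow, ← Units.val_pow_eq_pow_val, hws, Units.val_one, mul_one, hxs]
  have hcollide : P (γ ^ i) = P (γ ^ i * w) := by
    rw [hP i hi _ hx hxs, hP i hi _ (mul_ne_zero hx w.ne_zero) hxws, mul_pow,
      ← Units.val_pow_eq_pow_val, hwr, Units.val_one, mul_one]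
  exact hw1 (Units.val_eq_one.mp (mul_eq_left₀ hx |>.mp (hinj hcollide).symm))

lemma IsCyclotomicMap.setOf_eq_of_surjective (hP : IsCyclotomicMap ℓ s γ A r P)
    (hγ : IsPrimitiveRoot γ (Fintype.card F - 1)) (hsℓ : s * ℓ = Fintype.card F - 1)
    (hA : ∀ i < ℓ, A i ≠ 0) (hP0 : P 0 = 0) (hsurj : Surjective P) :
    {z : F | ∃ i < ℓ, z = A i ^ s * (γ ^ s) ^ (i * r i)} = {z : F | z ^ ℓ = 1} := by
  have hγ0 : γ ≠ 0 := hγ.ne_zero (Nat.sub_pos_of_lt Fintype.one_lt_card).ne'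
  ext z
  simp only [Set.mem_ofPred_eq]
  constructor
  · rintro ⟨i, hi, rfl⟩
    rw [mul_pow, pow_pow_eq_one_of_mul_eq_card_sub_one hsℓ (hA i hi), pow_right_comm,
      pow_pow_eq_one_of_mul_eq_card_sub_one hsℓ hγ0, one_pow, one_mul]
  · intro hz
    have : NeZero ℓ := ⟨ne_zero_of_mul_eq_card_sub_one hsℓ⟩
    obtain ⟨j, -, rfl⟩ :=
      (isPrimitiveRoot_pow_of_mul_eq_card_sub_one hγ hsℓ).eq_pow_of_pow_eq_one hz
    obtain ⟨x, hx⟩ := hsurj (γ ^ j)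
    have hx0 : x ≠ 0 := by
      rintro rfl
      exact pow_ne_zero j hγ0 (by rw [← hx, hP0])
    obtain ⟨i, hi, hxs⟩ := exists_pow_eq_pow_pow hγ hsℓ hx0
    exact ⟨i, hi, by rw [← hP.pow_apply_eq hi hx0 hxs, hx, pow_right_comm]⟩

lemma IsCyclotomicMap.apply_eq_zero_iff (hP : IsCyclotomicMap ℓ s γ A r P)
    (hγ : IsPrimitiveRoot γ (Fintype.card F - 1)) (hsℓ : s * ℓ = Fintype.card F - 1)
    (hA : ∀ i < ℓ, A i ≠ 0) (hP0 : P 0 = 0) {x : F} : P x = 0 ↔ x = 0 := by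
  refine ⟨fun hPx => by_contra fun hx => ?_, fun hx => hx ▸ hP0⟩
  obtain ⟨i, hi, hxs⟩ := exists_pow_eq_pow_pow hγ hsℓ hx
  rw [hP i hi x hx hxs] at hPx
  exact mul_ne_zero (hA i hi) (pow_ne_zero _ hx) hPx

lemma IsCyclotomicMap.injective_of_coprime (hP : IsCyclotomicMap ℓ s γ A r P)
    (hγ : IsPrimitiveRoot γ (Fintype.card F - 1)) (hsℓ : s * ℓ = Fintype.card F - 1)
    (hA : ∀ i < ℓ, A i ≠ 0) (hP0 : P 0 = 0) (hcop : ∀ i < ℓ, (r i).Coprime s)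
    (hset : {z : F | ∃ i < ℓ, z = A i ^ s * (γ ^ s) ^ (i * r i)} = {z : F | z ^ ℓ = 1}) :
    Injective P := by
  have hinj := injOn_range_of_setOf_eq_setOf_pow_eq_one
    (isPrimitiveRoot_pow_of_mul_eq_card_sub_one hγ hsℓ)
    (Nat.pos_of_ne_zero (ne_zero_of_mul_eq_card_sub_one hsℓ)) hset
  have hzero : ∀ {x}, P x = 0 ↔ x = 0 := hP.apply_eq_zero_iff hγ hsℓ hA hP0
  intro x y hxy
  rcases eq_or_ne x 0 with rfl | hx
  · exact (hzero.mp (hxy ▸ hP0)).symm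
  have hy : y ≠ 0 := fun hy => hx (hzero.mp (by rw [hxy, hy, hP0]))
  obtain ⟨i, hi, hxs⟩ := exists_pow_eq_pow_pow hγ hsℓ hx
  obtain ⟨j, hj, hys⟩ := exists_pow_eq_pow_pow hγ hsℓ hy
  obtain rfl : i = j := hinj (Finset.mem_range.mpr hi) (Finset.mem_range.mpr hj) <| by
    dsimp only
    rw [← hP.pow_apply_eq hi hx hxs, ← hP.pow_apply_eq hj hy hys, hxy]
  refine eq_of_pow_eq_of_coprime hy (hcop i hi) ?_ (hxs.trans hys.symm)
  exact mul_left_cancel₀ (hA i hi) (by rw [← hP i hi x hx hxs, ← hP i hi y hy hys, hxy])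

end CyclotomicMap

theorem stmt_0_general {F : Type*} [Field F] [Fintype F] (q ℓ s : ℕ)
    (hq : Fintype.card F = q) (hℓ : ℓ ∣ q - 1) (hs : s = (q - 1) / ℓ)
    (γ : F) (hγ0 : γ ≠ 0) (hγ : ∀ x : F, x ≠ 0 → ∃ k : ℕ, γ ^ k = x)
    (A : ℕ → F) (hA : ∀ i < ℓ, A i ≠ 0)
    (r : ℕ → ℕ)
    (P : F → F) (hP0 : P 0 = 0)
    (hP : ∀ i < ℓ, ∀ x : F, x ≠ 0 → x ^ s = (γ ^ s) ^ i → P x = A i * x ^ (r i)) :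
    Function.Bijective P ↔
      (∀ i < ℓ, Nat.gcd (r i) s = 1) ∧
        {z : F | ∃ i < ℓ, z = (A i) ^ s * (γ ^ s) ^ (i * r i)} = {z : F | z ^ ℓ = 1} := by
  subst hq hs
  have hsℓ : (Fintype.card F - 1) / ℓ * ℓ = Fintype.card F - 1 := Nat.div_mul_cancel hℓ
  have hprim := IsPrimitiveRoot.of_forall_exists_pow_eq hγ0 hγ
  have hP' : IsCyclotomicMap ℓ _ γ A r P := hP
  constructor
  · intro hbij
    exact ⟨fun i hi => hP'.coprime_of_injective hγ0 (Dvd.intro ℓ hsℓ) hbij.1 hi,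
      hP'.setOf_eq_of_surjective hprim hsℓ hA hP0 hbij.2⟩
  · rintro ⟨hcop, hset⟩
    exact Finite.injective_iff_bijective.mp
      (hP'.injective_of_coprime hprim hsℓ hA hP0 hcop hset)

theorem stmt_0 {F : Type*} [Field F] [Fintype F] (q ℓ s : ℕ)
    (hq : Fintype.card F = q) (hℓpos : 0 < ℓ) (hℓ : ℓ ∣ q - 1) (hs : s = (q - 1) / ℓ)
    (γ : F) (hγ0 : γ ≠ 0) (hγ : ∀ x : F, x ≠ 0 → ∃ k : ℕ, γ ^ k = x)
    (A : ℕ → F) (hA : ∀ i < ℓ, A i ≠ 0)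
    (r : ℕ → ℕ) (hr : ∀ i < ℓ, 0 < r i)
    (P : F → F) (hP0 : P 0 = 0)
    (hP : ∀ i < ℓ, ∀ x : F, x ≠ 0 → x ^ s = (γ ^ s) ^ i → P x = A i * x ^ (r i)) :
    Function.Bijective P ↔
      (∀ i < ℓ, Nat.gcd (r i) s = 1) ∧
        {z : F | ∃ i < ℓ, z = (A i) ^ s * (γ ^ s) ^ (i * r i)} = {z : F | z ^ ℓ = 1} :=
  stmt_0_general q ℓ s hq hℓ hs γ hγ0 hγ A hA r P hP0 hP
end

section
/- Let q be a prime power with ℓ ∣ q-1, s=(q-1)/ℓ, γ primitive in F_q, ζ=γ^s. For A_0,...,A_{ℓ-1} ∈ F_q* and positive integers r_0,...,r_{ℓ-1} with gcd(r_i,s)=1, the piecewise map P (P(0)=0, P(x)=A_i x^{r_i} for x ∈ C_i) is a bijection of F_q if and only if for every i < i' in {0,...,ℓ-1}, A_i·C_{i·r_i mod ℓ} ≠ A_{i'}·C_{i'·r_{i'} mod ℓ} as cosets of C_0 in F_q*. -/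
/-!
Raising to the power `r_i` sends `C_i` into `C_{i r_i}`, injectively because
`gcd (r_i, s) = 1` and `x ^ s` is constant on `C_i`; hence `P` maps `C_i` injectively into the
coset `A_i C_{i r_i}`. Two cosets of `C_0` are equal or disjoint, and all have the same size, so
`P` is injective exactly when the cosets `A_i C_{i r_i}` are pairwise distinct: if two coincide,
`C_i ∪ C_{i'}` would be mapped injectively into a set half its size.
-/

open Set Function

lemma forall_lt_ne_iff_injOn_Iio {α β : Type*} [LinearOrder α] {f : α → β} {ℓ : α} :
    (∀ i j, i < j → j < ℓ → f i ≠ f j) ↔ InjOn f (Iio ℓ) := by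
  refine ⟨fun h i hi j hj hij => ?_, fun h i j hij hj hf => hij.ne (h (hij.trans hj) hj hf)⟩
  by_contra hne
  rcases lt_or_gt_of_ne hne with hlt | hlt
  · exact h i j hlt hj hij
  · exact h j i hlt hi hij.symm

lemma orderOf_pow_of_mul_eq {M : Type*} [Monoid M] {x : M} {s ℓ : ℕ}
    (h : s * ℓ = orderOf x) (hs : s ≠ 0) : orderOf (x ^ s) = ℓ := by
  rw [orderOf_pow_of_dvd hs ⟨ℓ, h.symm⟩, ← h, Nat.mul_div_cancel_left ℓ (Nat.pos_of_ne_zero hs)]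

lemma orderOf_eq_card_sub_one_of_forall_pow_eq {G : Type*} [GroupWithZero G] {γ : G}
    (hγ0 : γ ≠ 0) (hγ : ∀ x : G, x ≠ 0 → ∃ k : ℕ, γ ^ k = x) :
    orderOf γ = Nat.card G - 1 := by
  rw [← Units.val_mk0 hγ0, orderOf_units, orderOf_eq_card_of_forall_mem_powers, Nat.card_units]
  intro v
  obtain ⟨k, hk⟩ := hγ v v.ne_zero
  exact ⟨k, Units.ext (by simp [hk])⟩

section powFiber

variable {G : Type*} [CommGroupWithZero G]

/-- With `ζ = γ ^ s`, the cyclotomic coset `C_i` is `powFiber s (ζ ^ i)`. -/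
def powFiber (n : ℕ) (t : G) : Set G := {x | x ≠ 0 ∧ x ^ n = t}

lemma image_mul_powFiber {u : G} (hu : u ≠ 0) (n : ℕ) (t : G) :
    (u * ·) '' powFiber n t = powFiber n (u ^ n * t) := by
  ext y
  constructor
  · rintro ⟨x, ⟨hx0, rfl⟩, rfl⟩
    exact ⟨mul_ne_zero hu hx0, mul_pow u x n⟩
  · rintro ⟨hy0, hy⟩
    refine ⟨u⁻¹ * y, ⟨mul_ne_zero (inv_ne_zero hu) hy0, ?_⟩, mul_inv_cancel_left₀ hu y⟩
    rw [mul_pow, hy, inv_pow, inv_mul_cancel_left₀ (pow_ne_zero n hu)]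

lemma image_mul_powFiber_eq_of_mem {u u' t t' z : G} {n : ℕ} (hu : u ≠ 0) (hu' : u' ≠ 0)
    (hz : z ∈ (u * ·) '' powFiber n t) (hz' : z ∈ (u' * ·) '' powFiber n t') :
    (u * ·) '' powFiber n t = (u' * ·) '' powFiber n t' := by
  rw [image_mul_powFiber hu, image_mul_powFiber hu'] at *
  exact congrArg _ (hz.2.symm.trans hz'.2)

lemma pow_mem_powFiber {x t : G} {n : ℕ} (hx : x ∈ powFiber n t) (m : ℕ) :
    x ^ m ∈ powFiber n (t ^ m) :=
  ⟨pow_ne_zero m hx.1, by rw [← pow_mul, mul_comm, pow_mul, hx.2]⟩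

lemma disjoint_powFiber {t t' : G} (h : t ≠ t') (n : ℕ) :
    Disjoint (powFiber n t) (powFiber n t') :=
  disjoint_left.2 fun _ hx hx' => h (hx.2.symm.trans hx'.2)

lemma injOn_pow_powFiber {r n : ℕ} (h : r.Coprime n) (t : G) : InjOn (· ^ r) (powFiber n t) := by
  rintro x ⟨-, hx⟩ y ⟨hy0, hy⟩ (hxy : x ^ r = y ^ r)
  rw [← div_eq_one_iff_eq hy0, ← orderOf_eq_one_iff, ← Nat.dvd_one, ← h.gcd_eq_one]
  refine Nat.dvd_gcd (orderOf_dvd_of_pow_eq_one ?_) (orderOf_dvd_of_pow_eq_one ?_)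
  · rw [div_pow, hxy, div_self (pow_ne_zero r hy0)]
  · rw [div_pow, hx, ← hy, div_self (pow_ne_zero n hy0)]

lemma ncard_powFiber_pow {v : G} (hv : v ≠ 0) (n : ℕ) :
    (powFiber n (v ^ n)).ncard = (powFiber n (1 : G)).ncard := by
  rw [← mul_one (v ^ n), ← image_mul_powFiber hv,
    ncard_image_of_injective _ (mul_right_injective₀ hv)]

end powFiber

section PiecewiseMonomial

variable {G : Type*} [CommGroupWithZero G] {ζ : G} {s ℓ : ℕ} {A : ℕ → G} {r : ℕ → ℕ} {P : G → G}

lemma exists_lt_mem_powFiber {γ : G} (hγ : ∀ x : G, x ≠ 0 → ∃ k : ℕ, γ ^ k = x)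
    (hζ : orderOf (γ ^ s) = ℓ) (hℓ : 0 < ℓ) {x : G} (hx : x ≠ 0) :
    ∃ i < ℓ, x ∈ powFiber s ((γ ^ s) ^ i) := by
  obtain ⟨k, rfl⟩ := hγ x hx
  refine ⟨k % ℓ, Nat.mod_lt k hℓ, hx, ?_⟩
  rw [← hζ, pow_mod_orderOf, ← pow_mul, ← pow_mul, mul_comm]

lemma mapsTo_image_mul_powFiber (hζ : orderOf ζ = ℓ) {i : ℕ}
    (hP : ∀ x ∈ powFiber s (ζ ^ i), P x = A i * x ^ r i) :
    MapsTo P (powFiber s (ζ ^ i)) ((A i * ·) '' powFiber s (ζ ^ (i * r i % ℓ))) := by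
  intro x hx
  rw [hP x hx, ← hζ, pow_mod_orderOf, pow_mul]
  exact mem_image_of_mem _ (pow_mem_powFiber hx (r i))

lemma injOn_image_of_injective [Finite G] {γ : G} (hγ0 : γ ≠ 0) (hζ : orderOf (γ ^ s) = ℓ)
    (hA : ∀ i < ℓ, A i ≠ 0)
    (hP : ∀ i < ℓ, ∀ x ∈ powFiber s ((γ ^ s) ^ i), P x = A i * x ^ r i) (hinj : Injective P) :
    InjOn (fun i => (A i * ·) '' powFiber s ((γ ^ s) ^ (i * r i % ℓ))) (Iio ℓ) := by
  intro i hi j hj hD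
  dsimp only at hD
  by_contra hij
  have hcard : ∀ k, (powFiber s ((γ ^ s) ^ k)).ncard = (powFiber s (1 : G)).ncard := fun k => by
    rw [← pow_mul, mul_comm, pow_mul]
    exact ncard_powFiber_pow (pow_ne_zero k hγ0) s
  have hdisj : Disjoint (powFiber s ((γ ^ s) ^ i)) (powFiber s ((γ ^ s) ^ j)) :=
    disjoint_powFiber (fun h => hij (pow_injOn_Iio_orderOf (hζ ▸ hi) (hζ ▸ hj) h)) s
  have hmaps := (mapsTo_image_mul_powFiber hζ (hP i hi)).union
    (hD ▸ mapsTo_image_mul_powFiber hζ (hP j hj))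
  have hle := ncard_le_ncard_of_injOn P hmaps hinj.injOn
  rw [ncard_union_eq hdisj, hcard, hcard,
    ncard_image_of_injective _ (mul_right_injective₀ (hA i hi)), hcard] at hle
  have hpos : 0 < (powFiber s (1 : G)).ncard := (ncard_pos (toFinite _)).2 ⟨1, one_ne_zero, one_pow s⟩
  omega

lemma injective_of_injOn_image (hζ : orderOf ζ = ℓ) (hA : ∀ i < ℓ, A i ≠ 0)
    (hgcd : ∀ i < ℓ, (r i).Coprime s) (hP0 : P 0 = 0)
    (hcover : ∀ x : G, x ≠ 0 → ∃ i < ℓ, x ∈ powFiber s (ζ ^ i))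
    (hP : ∀ i < ℓ, ∀ x ∈ powFiber s (ζ ^ i), P x = A i * x ^ r i)
    (hD : InjOn (fun i => (A i * ·) '' powFiber s (ζ ^ (i * r i % ℓ))) (Iio ℓ)) :
    Injective P := by
  have hmaps := fun i hi => mapsTo_image_mul_powFiber hζ (hP i hi)
  have hne : ∀ x, x ≠ 0 → P x ≠ 0 := fun x hx => by
    obtain ⟨i, hi, hxi⟩ := hcover x hx
    have hPx := hmaps i hi hxi
    rw [image_mul_powFiber (hA i hi)] at hPx
    exact hPx.1
  intro x y hxy
  rcases eq_or_ne x 0 with rfl | hx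
  · by_contra hy
    exact hne y (Ne.symm hy) (hxy.symm.trans hP0)
  rcases eq_or_ne y 0 with rfl | hy
  · exact absurd (hxy.trans hP0) (hne x hx)
  obtain ⟨i, hi, hxi⟩ := hcover x hx
  obtain ⟨j, hj, hyj⟩ := hcover y hy
  obtain rfl : i = j := hD hi hj <| image_mul_powFiber_eq_of_mem (hA i hi) (hA j hj)
    (hmaps i hi hxi) (hxy ▸ hmaps j hj hyj)
  rw [hP i hi x hxi, hP i hi y hyj] at hxy
  exact injOn_pow_powFiber (hgcd i hi) _ hxi hyj (mul_left_cancel₀ (hA i hi) hxy)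

end PiecewiseMonomial

theorem stmt_1_general {F : Type*} [Field F] [Fintype F] (q ℓ s : ℕ)
    (hq : Fintype.card F = q) (hℓ : ℓ ∣ q - 1) (hs : s = (q - 1) / ℓ)
    (γ : F) (hγ0 : γ ≠ 0) (hγ : ∀ x : F, x ≠ 0 → ∃ k : ℕ, γ ^ k = x)
    (A : ℕ → F) (hA : ∀ i < ℓ, A i ≠ 0)
    (r : ℕ → ℕ) (hgcd : ∀ i < ℓ, Nat.gcd (r i) s = 1)
    (P : F → F) (hP0 : P 0 = 0)
    (hP : ∀ i < ℓ, ∀ x : F, x ≠ 0 → x ^ s = (γ ^ s) ^ i → P x = A i * x ^ (r i)) :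
    Function.Bijective P ↔
      ∀ i i' : ℕ, i < i' → i' < ℓ →
        (fun c : F => A i * c) '' {x : F | x ≠ 0 ∧ x ^ s = (γ ^ s) ^ ((i * r i) % ℓ)} ≠
        (fun c : F => A i' * c) '' {x : F | x ≠ 0 ∧ x ^ s = (γ ^ s) ^ ((i' * r i') % ℓ)} := by
  have hsℓ : s * ℓ = q - 1 := hs ▸ Nat.div_mul_cancel hℓ
  have hq1 : q - 1 ≠ 0 := by
    have := hq ▸ Fintype.one_lt_card (α := F)
    omega
  have hζ : orderOf (γ ^ s) = ℓ := by
    refine orderOf_pow_of_mul_eq ?_ (left_ne_zero_of_mul (hsℓ ▸ hq1))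
    rw [hsℓ, orderOf_eq_card_sub_one_of_forall_pow_eq hγ0 hγ, Nat.card_eq_fintype_card, hq]
  have hℓ0 : 0 < ℓ := Nat.pos_of_ne_zero (right_ne_zero_of_mul (hsℓ ▸ hq1))
  have hP' : ∀ i < ℓ, ∀ x ∈ powFiber s ((γ ^ s) ^ i), P x = A i * x ^ r i :=
    fun i hi x hx => hP i hi x hx.1 hx.2
  rw [forall_lt_ne_iff_injOn_Iio, ← Finite.injective_iff_bijective]
  exact ⟨injOn_image_of_injective hγ0 hζ hA hP',
    injective_of_injOn_image hζ hA hgcd hP0 (fun x hx => exists_lt_mem_powFiber hγ hζ hℓ0 hx) hP'⟩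

theorem stmt_1 {F : Type*} [Field F] [Fintype F] (q ℓ s : ℕ)
    (hq : Fintype.card F = q) (hℓpos : 0 < ℓ) (hℓ : ℓ ∣ q - 1) (hs : s = (q - 1) / ℓ)
    (γ : F) (hγ0 : γ ≠ 0) (hγ : ∀ x : F, x ≠ 0 → ∃ k : ℕ, γ ^ k = x)
    (A : ℕ → F) (hA : ∀ i < ℓ, A i ≠ 0)
    (r : ℕ → ℕ) (hr : ∀ i < ℓ, 0 < r i) (hgcd : ∀ i < ℓ, Nat.gcd (r i) s = 1)
    (P : F → F) (hP0 : P 0 = 0)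
    (hP : ∀ i < ℓ, ∀ x : F, x ≠ 0 → x ^ s = (γ ^ s) ^ i → P x = A i * x ^ (r i)) :
    Function.Bijective P ↔
      ∀ i i' : ℕ, i < i' → i' < ℓ →
        (fun c : F => A i * c) '' {x : F | x ≠ 0 ∧ x ^ s = (γ ^ s) ^ ((i * r i) % ℓ)} ≠
        (fun c : F => A i' * c) '' {x : F | x ≠ 0 ∧ x ^ s = (γ ^ s) ^ ((i' * r i') % ℓ)} :=
  stmt_1_general q ℓ s hq hℓ hs γ hγ0 hγ A hA r hgcd P hP0 hP
end

section
/- Let q be an odd prime power, s=(q-1)/2, and let C_0 be the set of nonzero squares and C_1 the set of nonsquares in F_q. Let r_0, r_1 be positive integers and f_0, f_1 ∈ F_q[x]. Define f(0)=0, f(x)=x^{r_0} f_0(x^{(q-1)/2}) for x ∈ C_0, and f(x)=x^{r_1} f_1(x^{(q-1)/2}) for x ∈ C_1. Then f is a bijection of F_q if and only if gcd(r_0,(q-1)/2)=gcd(r_1,(q-1)/2)=1 and η(f_0(1)·f_1(-1)) = (-1)^{r_1+1}, where η is the quadratic character of F_q. -/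
/-!
On `F_q^*` one has `x ^ ((q - 1) / 2) = η x`, so `f` is `x ↦ x ^ r₀ * f₀(1)` on the squares and
`x ↦ x ^ r₁ * f₁(-1)` on the nonsquares. The squares form a cyclic group of order `(q - 1) / 2`
and the nonsquares a coset of it, so each piece is injective iff `gcd (rᵢ, (q - 1) / 2) = 1`.
The values on the squares all lie in the class `η = η (f₀ 1)` and those on the nonsquares in
the class `η = (-1) ^ r₁ * η (f₁ (-1))`; `f` is a bijection exactly when these classes are the
two different classes of `F_q^*`.
-/

open scoped Classical in
/-- The quadratic character: 0 at 0, 1 at nonzero squares, -1 at nonsquares. -/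
noncomputable def quadChar {F : Type*} [Field F] (a : F) : ℤ :=
  if a = 0 then 0 else if IsSquare a then 1 else -1

open Function

lemma eq_of_pow_eq_of_pow_eq_of_coprime {G₀ : Type*} [CommGroupWithZero G₀] {x y : G₀}
    (hy : y ≠ 0) {m n : ℕ} (hmn : m.Coprime n) (hm : x ^ m = y ^ m) (hn : x ^ n = y ^ n) :
    x = y := by
  have hdiv : (x / y) ^ m = 1 ∧ (x / y) ^ n = 1 := by
    simp only [div_pow, hm, hn, div_self (pow_ne_zero _ hy), and_self]
  exact (div_eq_one_iff_eq hy).mp ((pow_eq_one_iff_of_coprime hmn).mp hdiv)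

lemma quadChar_eq_quadraticChar {F : Type*} [Field F] [Fintype F] [DecidableEq F] (a : F) :
    quadChar a = quadraticChar F a := by
  by_cases ha : a = 0 <;> by_cases hsq : IsSquare a <;>
    simp [quadChar, quadraticChar_apply, quadraticCharFun, ha, hsq]

lemma quadraticChar_mul_eq_neg_iff {F : Type*} [Field F] [Fintype F] [DecidableEq F] {a b : F}
    {ε : ℤ} (hε : ε = 1 ∨ ε = -1) :
    quadraticChar F (a * b) = -ε ↔
      a ≠ 0 ∧ b ≠ 0 ∧ quadraticChar F a ≠ ε * quadraticChar F b := by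
  obtain rfl | ha := eq_or_ne a 0
  · rcases hε with rfl | rfl <;> simp
  obtain rfl | hb := eq_or_ne b 0
  · rcases hε with rfl | rfl <;> simp
  rw [map_mul]
  rcases hε with rfl | rfl <;> rcases quadraticChar_dichotomy ha with h | h <;>
    rcases quadraticChar_dichotomy hb with h' | h' <;> simp [h, h', ha, hb]

namespace FiniteField

variable {F : Type*} [Field F] [Fintype F]

lemma pow_card_div_two_eq_neg_one (hF : ringChar F ≠ 2) {x : F} (hx : ¬IsSquare x) :
    x ^ (Fintype.card F / 2) = -1 :=
  have hx0 : x ≠ 0 := by rintro rfl; exact hx IsSquare.zero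
  (pow_dichotomy hF hx0).resolve_left (mt (isSquare_iff hF hx0).mpr hx)

/-- A common prime factor `p` of `r` and `(q - 1) / 2` yields, by Cauchy's theorem, an element of
order `p` of `F_q^*`; it is a square by Euler's criterion. -/
lemma exists_isSquare_ne_one_pow_eq_one (hF : ringChar F ≠ 2) {r : ℕ}
    (hr : ¬r.Coprime (Fintype.card F / 2)) : ∃ z : F, z ≠ 0 ∧ IsSquare z ∧ z ≠ 1 ∧ z ^ r = 1 := by
  classical
  obtain ⟨p, hp, hpr, hps⟩ := Nat.Prime.not_coprime_iff_dvd.mp hr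
  have := Fact.mk hp
  have hp_card : p ∣ Fintype.card Fˣ := by
    rw [Fintype.card_units, ← Nat.two_mul_odd_div_two (odd_card_of_char_ne_two hF)]
    exact hps.mul_left 2
  obtain ⟨z, hz⟩ := exists_prime_orderOf_dvd_card p hp_card
  have hpow : ∀ n, p ∣ n → (z : F) ^ n = 1 := fun n hn => by
    rw [← Units.val_pow_eq_pow_val, orderOf_dvd_iff_pow_eq_one.mp (hz ▸ hn), Units.val_one]
  refine ⟨z, z.ne_zero, (isSquare_iff hF z.ne_zero).mpr (hpow _ hps), fun h => ?_, hpow r hpr⟩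
  rw [Units.val_eq_one.mp h, orderOf_one] at hz
  exact hp.one_lt.ne hz

end FiniteField

section PiecewiseMonomial

open FiniteField

variable {F : Type*} [Field F]

structure IsPiecewiseMonomial (g : F → F) (r₀ r₁ : ℕ) (c₀ c₁ : F) : Prop where
  map_zero : g 0 = 0
  apply_of_isSquare : ∀ x, x ≠ 0 → IsSquare x → g x = x ^ r₀ * c₀
  apply_of_not_isSquare : ∀ x, ¬IsSquare x → g x = x ^ r₁ * c₁

namespace IsPiecewiseMonomial

variable {g : F → F} {r₀ r₁ : ℕ} {c₀ c₁ : F}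

lemma left_ne_zero (hg : IsPiecewiseMonomial g r₀ r₁ c₀ c₁) (hinj : Injective g) : c₀ ≠ 0 :=
  fun h => one_ne_zero <| hinj <| by
    rw [hg.apply_of_isSquare 1 one_ne_zero IsSquare.one, h, mul_zero, hg.map_zero]

variable [Fintype F]

lemma right_ne_zero (hF : ringChar F ≠ 2) (hg : IsPiecewiseMonomial g r₀ r₁ c₀ c₁)
    (hinj : Injective g) : c₁ ≠ 0 := fun h => by
  obtain ⟨n, hn⟩ := exists_nonsquare hF
  have hn0 : n = 0 := hinj (by rw [hg.apply_of_not_isSquare n hn, h, mul_zero, hg.map_zero])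
  exact hn (hn0 ▸ IsSquare.zero)

lemma coprime_left (hF : ringChar F ≠ 2) (hg : IsPiecewiseMonomial g r₀ r₁ c₀ c₁)
    (hinj : Injective g) : r₀.Coprime (Fintype.card F / 2) := by
  by_contra h
  obtain ⟨z, hz0, hzsq, hz1, hzr⟩ := exists_isSquare_ne_one_pow_eq_one hF h
  refine hz1 (hinj ?_)
  rw [hg.apply_of_isSquare z hz0 hzsq, hg.apply_of_isSquare 1 one_ne_zero IsSquare.one, hzr,
    one_pow]

lemma coprime_right (hF : ringChar F ≠ 2) (hg : IsPiecewiseMonomial g r₀ r₁ c₀ c₁)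
    (hinj : Injective g) : r₁.Coprime (Fintype.card F / 2) := by
  classical
  by_contra h
  obtain ⟨z, hz0, hzsq, hz1, hzr⟩ := exists_isSquare_ne_one_pow_eq_one hF h
  obtain ⟨n, hn⟩ := exists_nonsquare hF
  have hn0 : n ≠ 0 := by rintro rfl; exact hn IsSquare.zero
  have hnz : ¬IsSquare (n * z) := by
    rw [← quadraticChar_neg_one_iff_not_isSquare, map_mul,
      quadraticChar_neg_one_iff_not_isSquare.mpr hn, (quadraticChar_one_iff_isSquare hz0).mpr hzsq,
      mul_one]
  refine hz1 (mul_left_cancel₀ hn0 ((hinj ?_).trans (mul_one n).symm))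
  rw [hg.apply_of_not_isSquare _ hnz, hg.apply_of_not_isSquare n hn, mul_pow, hzr, mul_one]

variable [DecidableEq F]

lemma quadraticChar_apply_of_isSquare (hg : IsPiecewiseMonomial g r₀ r₁ c₀ c₁) {x : F}
    (hx : x ≠ 0) (hsq : IsSquare x) : quadraticChar F (g x) = quadraticChar F c₀ := by
  rw [hg.apply_of_isSquare x hx hsq, map_mul, map_pow,
    (quadraticChar_one_iff_isSquare hx).mpr hsq, one_pow, one_mul]

lemma quadraticChar_apply_of_not_isSquare (hg : IsPiecewiseMonomial g r₀ r₁ c₀ c₁) {x : F}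
    (hx : ¬IsSquare x) : quadraticChar F (g x) = (-1) ^ r₁ * quadraticChar F c₁ := by
  rw [hg.apply_of_not_isSquare x hx, map_mul, map_pow,
    quadraticChar_neg_one_iff_not_isSquare.mpr hx]

/-- If the two square classes agreed, every nonzero value of `g` would lie in that class and `g`
would miss the other one. -/
lemma quadraticChar_ne_of_surjective (hF : ringChar F ≠ 2)
    (hg : IsPiecewiseMonomial g r₀ r₁ c₀ c₁) (hsurj : Surjective g) :
    quadraticChar F c₀ ≠ (-1) ^ r₁ * quadraticChar F c₁ := by
  intro h
  have hclass : ∀ y, quadraticChar F y ≠ 0 → quadraticChar F y = quadraticChar F c₀ := by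
    intro y hy
    obtain ⟨x, rfl⟩ := hsurj y
    obtain rfl | hx := eq_or_ne x 0
    · simp [hg.map_zero] at hy
    by_cases hsq : IsSquare x
    · exact hg.quadraticChar_apply_of_isSquare hx hsq
    · rw [hg.quadraticChar_apply_of_not_isSquare hsq, h]
  obtain ⟨a, ha⟩ := quadraticChar_exists_neg_one hF
  have h₁ := hclass 1 (by simp)
  have ha' := hclass a (by simp [ha])
  rw [map_one] at h₁
  rw [ha] at ha'
  omega

lemma isSquare_iff_of_apply_eq (hg : IsPiecewiseMonomial g r₀ r₁ c₀ c₁)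
    (hc : quadraticChar F c₀ ≠ (-1) ^ r₁ * quadraticChar F c₁) {x y : F} (hx : x ≠ 0)
    (hy : y ≠ 0) (hxy : g x = g y) : IsSquare x ↔ IsSquare y := by
  have hsep : ∀ {x y : F}, x ≠ 0 → IsSquare x → ¬IsSquare y → g x ≠ g y :=
    fun hx hxs hys hxy => hc <| by
      rw [← hg.quadraticChar_apply_of_isSquare hx hxs, hxy,
        hg.quadraticChar_apply_of_not_isSquare hys]
  exact ⟨fun hxs => not_not.mp fun hys => hsep hx hxs hys hxy,
    fun hys => not_not.mp fun hxs => hsep hy hys hxs hxy.symm⟩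

lemma injective (hF : ringChar F ≠ 2) (hg : IsPiecewiseMonomial g r₀ r₁ c₀ c₁)
    (h₀ : r₀.Coprime (Fintype.card F / 2)) (h₁ : r₁.Coprime (Fintype.card F / 2))
    (hc₀ : c₀ ≠ 0) (hc₁ : c₁ ≠ 0) (hc : quadraticChar F c₀ ≠ (-1) ^ r₁ * quadraticChar F c₁) :
    Injective g := by
  have hne : ∀ x, x ≠ 0 → g x ≠ 0 := fun x hx => by
    by_cases hsq : IsSquare x
    · rw [hg.apply_of_isSquare x hx hsq]; exact mul_ne_zero (pow_ne_zero _ hx) hc₀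
    · rw [hg.apply_of_not_isSquare x hsq]; exact mul_ne_zero (pow_ne_zero _ hx) hc₁
  intro x y hxy
  obtain rfl | hx := eq_or_ne x 0
  · by_contra hy
    exact hne y (Ne.symm hy) (hxy.symm.trans hg.map_zero)
  obtain rfl | hy := eq_or_ne y 0
  · exact absurd (hxy.trans hg.map_zero) (hne x hx)
  have hsq := hg.isSquare_iff_of_apply_eq hc hx hy hxy
  by_cases hxs : IsSquare x
  · have hys := hsq.mp hxs
    refine eq_of_pow_eq_of_pow_eq_of_coprime hy h₀ (mul_right_cancel₀ hc₀ ?_) ?_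
    · rwa [← hg.apply_of_isSquare x hx hxs, ← hg.apply_of_isSquare y hy hys]
    · rw [(isSquare_iff hF hx).mp hxs, (isSquare_iff hF hy).mp hys]
  · have hys := mt hsq.mpr hxs
    refine eq_of_pow_eq_of_pow_eq_of_coprime hy h₁ (mul_right_cancel₀ hc₁ ?_) ?_
    · rwa [← hg.apply_of_not_isSquare x hxs, ← hg.apply_of_not_isSquare y hys]
    · rw [pow_card_div_two_eq_neg_one hF hxs, pow_card_div_two_eq_neg_one hF hys]

theorem bijective_iff (hF : ringChar F ≠ 2) (hg : IsPiecewiseMonomial g r₀ r₁ c₀ c₁) :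
    Bijective g ↔ r₀.Coprime (Fintype.card F / 2) ∧ r₁.Coprime (Fintype.card F / 2) ∧
      c₀ ≠ 0 ∧ c₁ ≠ 0 ∧ quadraticChar F c₀ ≠ (-1) ^ r₁ * quadraticChar F c₁ := by
  refine ⟨fun hbij => ⟨hg.coprime_left hF hbij.1, hg.coprime_right hF hbij.1,
    hg.left_ne_zero hbij.1, hg.right_ne_zero hF hbij.1,
    hg.quadraticChar_ne_of_surjective hF hbij.2⟩, ?_⟩
  rintro ⟨h₀, h₁, hc₀, hc₁, hc⟩
  exact Finite.injective_iff_bijective.mp (hg.injective hF h₀ h₁ hc₀ hc₁ hc)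

end IsPiecewiseMonomial

end PiecewiseMonomial

theorem stmt_2_general {F : Type*} [Field F] [Fintype F] (q : ℕ)
    (hq : Fintype.card F = q) (hodd : Odd q)
    (r₀ r₁ : ℕ)
    (f₀ f₁ : Polynomial F)
    (f : F → F) (hf0 : f 0 = 0)
    (hfsq : ∀ x : F, x ≠ 0 → IsSquare x → f x = x ^ r₀ * f₀.eval (x ^ ((q - 1) / 2)))
    (hfns : ∀ x : F, ¬ IsSquare x → f x = x ^ r₁ * f₁.eval (x ^ ((q - 1) / 2))) :
    Function.Bijective f ↔
      Nat.gcd r₀ ((q - 1) / 2) = 1 ∧ Nat.gcd r₁ ((q - 1) / 2) = 1 ∧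
        quadChar (f₀.eval 1 * f₁.eval (-1)) = (-1) ^ (r₁ + 1) := by
  classical
  subst hq
  rw [Nat.odd_iff] at hodd
  have hF : ringChar F ≠ 2 := fun h => by
    have := FiniteField.even_card_of_char_two h
    omega
  have hs : (Fintype.card F - 1) / 2 = Fintype.card F / 2 := by omega
  have hg : IsPiecewiseMonomial f r₀ r₁ (f₀.eval 1) (f₁.eval (-1)) :=
    { map_zero := hf0
      apply_of_isSquare := fun x hx hsq => by
        rw [hfsq x hx hsq, hs, (FiniteField.isSquare_iff hF hx).mp hsq]
      apply_of_not_isSquare := fun x hx => by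
        rw [hfns x hx, hs, FiniteField.pow_card_div_two_eq_neg_one hF hx] }
  rw [hg.bijective_iff hF, hs, quadChar_eq_quadraticChar, pow_succ, mul_neg_one,
    quadraticChar_mul_eq_neg_iff (neg_one_pow_eq_or ℤ r₁)]

theorem stmt_2 {F : Type*} [Field F] [Fintype F] (q : ℕ)
    (hq : Fintype.card F = q) (hodd : Odd q)
    (r₀ r₁ : ℕ) (hr₀ : 0 < r₀) (hr₁ : 0 < r₁)
    (f₀ f₁ : Polynomial F)
    (f : F → F) (hf0 : f 0 = 0)
    (hfsq : ∀ x : F, x ≠ 0 → IsSquare x → f x = x ^ r₀ * f₀.eval (x ^ ((q - 1) / 2)))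
    (hfns : ∀ x : F, ¬ IsSquare x → f x = x ^ r₁ * f₁.eval (x ^ ((q - 1) / 2))) :
    Function.Bijective f ↔
      Nat.gcd r₀ ((q - 1) / 2) = 1 ∧ Nat.gcd r₁ ((q - 1) / 2) = 1 ∧
        quadChar (f₀.eval 1 * f₁.eval (-1)) = (-1) ^ (r₁ + 1) :=
  stmt_2_general q hq hodd r₀ r₁ f₀ f₁ f hf0 hfsq hfns
end

section
/- Let p be an odd prime, n, t, r positive integers, and q = p^n. Then the polynomial f(x) = (1 - x^t)·x^{(q-1)/2 + r} - x^r - x^{t+r} is a permutation polynomial of F_q if and only if gcd(r, q-1) = 1 and gcd(t+r, (q-1)/2) = 1. -/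
/-!
Write `m = (q - 1) / 2`, so that `x ^ m = ±1` for `x ≠ 0` according as `x` is a square or not.
On squares the polynomial equals `-2 x ^ (t + r)` and on non-squares `-2 x ^ r`. When `r` is odd
both pieces preserve the quadratic character, `f(x) ^ m = (-2) ^ m x ^ m`, so a collision can only
occur within one class, and there the two power maps are injective exactly under the gcd
conditions. Conversely a prime `ℓ` dividing one of the gcds yields a nontrivial `ℓ`-th root of
unity `u` with `f(u) = f(1)` or `f(u g) = f(g)` for a non-square `g`; when `ℓ = 2` does not
divide `m`, the collision is `f(-1) = f(1)`.
-/

open Function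

theorem eq_of_pow_eq_of_pow_eq_of_coprime_s3 {G : Type*} [CommGroupWithZero G] {x y : G} {a b : ℕ}
    (hy : y ≠ 0) (ha : x ^ a = y ^ a) (hb : x ^ b = y ^ b) (hab : a.Coprime b) : x = y := by
  have hdiv : (x / y) ^ a.gcd b = 1 := pow_gcd_eq_one.2
    ⟨by rw [div_pow, ha, div_self (pow_ne_zero _ hy)],
      by rw [div_pow, hb, div_self (pow_ne_zero _ hy)]⟩
  rwa [hab.gcd_eq_one, pow_one, div_eq_one_iff_eq hy] at hdiv

namespace FiniteField

variable {F : Type*} [Field F] [Fintype F]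

theorem exists_ne_one_pow_eq_one_of_prime_dvd {ℓ : ℕ} (hℓ : ℓ.Prime)
    (hdvd : ℓ ∣ Fintype.card F - 1) : ∃ u : F, u ≠ 1 ∧ ∀ k, ℓ ∣ k → u ^ k = 1 := by
  classical
  have := Fact.mk hℓ
  obtain ⟨u, hu⟩ := exists_prime_orderOf_dvd_card ℓ (G := Fˣ) (by rwa [Fintype.card_units])
  refine ⟨u, fun h => hℓ.one_lt.ne' ?_, fun k hk => ?_⟩
  · rw [← hu, Units.val_eq_one.1 h, orderOf_one]
  · rw [← Units.val_pow_eq_pow_val, orderOf_dvd_iff_pow_eq_one.1 (hu ▸ hk), Units.val_one]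

theorem exists_pow_card_div_two_eq_neg_one (hF : ringChar F ≠ 2) :
    ∃ g : F, g ≠ 0 ∧ g ^ (Fintype.card F / 2) = -1 := by
  obtain ⟨g, hg⟩ := exists_nonsquare hF
  have hg0 : g ≠ 0 := by rintro rfl; exact hg IsSquare.zero
  exact ⟨g, hg0, (pow_dichotomy hF hg0).resolve_left (mt (isSquare_iff hF hg0).2 hg)⟩

theorem card_div_two_ne_zero (hF : ringChar F ≠ 2) : Fintype.card F / 2 ≠ 0 := by
  have := odd_card_of_char_ne_two hF
  have := Fintype.one_lt_card (α := F)
  omega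

theorem two_mul_card_div_two (hF : ringChar F ≠ 2) :
    2 * (Fintype.card F / 2) = Fintype.card F - 1 := by
  have := odd_card_of_char_ne_two hF
  omega

end FiniteField

/-- With `m = (q - 1) / 2` this is the power map `-2 x ^ r` on `𝔽_q`, twisted by `x ^ t` on the
squares. -/
def quadTwist {R : Type*} [CommRing R] (m t r : ℕ) (x : R) : R :=
  (1 - x ^ t) * x ^ (m + r) - x ^ r - x ^ (t + r)

section CommRing

variable {R : Type*} [CommRing R] {m t r : ℕ} {x : R}

theorem quadTwist_of_pow_eq_one (h : x ^ m = 1) : quadTwist m t r x = -2 * x ^ (t + r) := by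
  rw [quadTwist, pow_add x m, h]
  ring

theorem quadTwist_of_pow_eq_neg_one (h : x ^ m = -1) : quadTwist m t r x = -2 * x ^ r := by
  rw [quadTwist, pow_add x m, h]
  ring

theorem quadTwist_zero (hr : r ≠ 0) : quadTwist m t r (0 : R) = 0 := by
  rw [quadTwist, zero_pow hr, zero_pow (by omega : m + r ≠ 0), zero_pow (by omega : t + r ≠ 0)]
  ring

end CommRing

section FiniteField

open FiniteField

variable {F : Type*} [Field F] [Fintype F] {t r : ℕ}

theorem quadTwist_pow_card_div_two (hF : ringChar F ≠ 2) (hr : Odd r) (x : F) :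
    quadTwist (Fintype.card F / 2) t r x ^ (Fintype.card F / 2) =
      (-2) ^ (Fintype.card F / 2) * x ^ (Fintype.card F / 2) := by
  have hm := card_div_two_ne_zero hF
  rcases eq_or_ne x 0 with rfl | hx
  · rw [quadTwist_zero hr.pos.ne', zero_pow hm, mul_zero]
  rcases pow_dichotomy hF hx with h | h
  · rw [quadTwist_of_pow_eq_one h, mul_pow, ← pow_mul, mul_comm (t + r), pow_mul, h, one_pow]
  · rw [quadTwist_of_pow_eq_neg_one h, mul_pow, ← pow_mul, mul_comm r, pow_mul, h,
      hr.neg_one_pow]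

theorem quadTwist_injective (hF : ringChar F ≠ 2) (hr : r.Coprime (Fintype.card F - 1))
    (htr : (t + r).Coprime (Fintype.card F / 2)) :
    Injective (quadTwist (Fintype.card F / 2) t r : F → F) := by
  have hm := card_div_two_ne_zero hF
  have h2m := two_mul_card_div_two hF
  have hrm : r.Coprime (Fintype.card F / 2) := hr.coprime_dvd_right ⟨2, by omega⟩
  have hrodd : Odd r := (hr.coprime_dvd_right ⟨Fintype.card F / 2, h2m.symm⟩).symm.odd_of_left
  have h2 : (-2 : F) ≠ 0 := neg_ne_zero.2 (Ring.two_ne_zero hF)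
  intro x y hxy
  have hpow : x ^ (Fintype.card F / 2) = y ^ (Fintype.card F / 2) := by
    have := congrArg (· ^ (Fintype.card F / 2)) hxy
    simp only [quadTwist_pow_card_div_two hF hrodd] at this
    exact mul_left_cancel₀ (pow_ne_zero _ h2) this
  rcases eq_or_ne x 0 with rfl | hx
  · exact ((pow_eq_zero_iff hm).1 (hpow.symm.trans (zero_pow hm))).symm
  have hy : y ≠ 0 := ne_zero_pow hm (hpow ▸ pow_ne_zero _ hx)
  rcases pow_dichotomy hF hx with h | h
  · rw [quadTwist_of_pow_eq_one h, quadTwist_of_pow_eq_one (hpow ▸ h)] at hxy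
    exact eq_of_pow_eq_of_pow_eq_of_coprime_s3 hy (mul_left_cancel₀ h2 hxy) hpow htr
  · rw [quadTwist_of_pow_eq_neg_one h, quadTwist_of_pow_eq_neg_one (hpow ▸ h)] at hxy
    exact eq_of_pow_eq_of_pow_eq_of_coprime_s3 hy (mul_left_cancel₀ h2 hxy) hpow hrm

theorem quadTwist_not_injective_of_not_coprime_add (hF : ringChar F ≠ 2)
    (htr : ¬(t + r).Coprime (Fintype.card F / 2)) :
    ¬Injective (quadTwist (Fintype.card F / 2) t r : F → F) := by
  obtain ⟨ℓ, hℓ, hℓtr, hℓm⟩ := Nat.Prime.not_coprime_iff_dvd.1 htr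
  obtain ⟨u, hu1, hu⟩ := exists_ne_one_pow_eq_one_of_prime_dvd hℓ
    (hℓm.trans ⟨2, by rw [← two_mul_card_div_two hF, mul_comm]⟩)
  intro hinj
  refine hu1 (hinj ?_)
  rw [quadTwist_of_pow_eq_one (hu _ hℓm), quadTwist_of_pow_eq_one (one_pow _), hu _ hℓtr, one_pow]

theorem quadTwist_not_injective_of_not_coprime (hF : ringChar F ≠ 2)
    (hr : ¬r.Coprime (Fintype.card F - 1)) :
    ¬Injective (quadTwist (Fintype.card F / 2) t r : F → F) := by
  obtain ⟨ℓ, hℓ, hℓr, hℓq⟩ := Nat.Prime.not_coprime_iff_dvd.1 hr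
  intro hinj
  by_cases hℓm : ℓ ∣ Fintype.card F / 2
  · obtain ⟨u, hu1, hu⟩ := exists_ne_one_pow_eq_one_of_prime_dvd hℓ hℓq
    obtain ⟨g, hg0, hg⟩ := exists_pow_card_div_two_eq_neg_one hF
    refine hu1 (mul_right_cancel₀ hg0 ((one_mul g).symm ▸ hinj ?_))
    rw [quadTwist_of_pow_eq_neg_one (by rw [mul_pow, hu _ hℓm, one_mul, hg]),
      quadTwist_of_pow_eq_neg_one hg, mul_pow, hu _ hℓr, one_mul]
  · have hℓ2 : ℓ = 2 := (Nat.prime_dvd_prime_iff_eq hℓ Nat.prime_two).1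
      ((hℓ.dvd_mul.1 (two_mul_card_div_two hF ▸ hℓq)).resolve_right hℓm)
    subst hℓ2
    have hmodd : Odd (Fintype.card F / 2) := Nat.not_even_iff_odd.1 (mt even_iff_two_dvd.1 hℓm)
    refine Ring.neg_one_ne_one_of_char_ne_two hF (hinj ?_)
    rw [quadTwist_of_pow_eq_neg_one hmodd.neg_one_pow, quadTwist_of_pow_eq_one (one_pow _),
      (even_iff_two_dvd.2 hℓr).neg_one_pow, one_pow]

theorem quadTwist_bijective_iff (hF : ringChar F ≠ 2) :
    Bijective (quadTwist (Fintype.card F / 2) t r : F → F) ↔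
      r.Coprime (Fintype.card F - 1) ∧ (t + r).Coprime (Fintype.card F / 2) := by
  rw [← Finite.injective_iff_bijective]
  exact ⟨fun h => ⟨by_contra fun hr => quadTwist_not_injective_of_not_coprime hF hr h,
    by_contra fun htr => quadTwist_not_injective_of_not_coprime_add hF htr h⟩,
    fun ⟨hr, htr⟩ => quadTwist_injective hF hr htr⟩

end FiniteField

theorem stmt_3_general {F : Type*} [Field F] [Fintype F] (p n t r q : ℕ)
    (hpodd : Odd p) (hq : q = p ^ n) (hcard : Fintype.card F = q) :
    Function.Bijective
        (fun x : F => (1 - x ^ t) * x ^ ((q - 1) / 2 + r) - x ^ r - x ^ (t + r)) ↔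
      Nat.gcd r (q - 1) = 1 ∧ Nat.gcd (t + r) ((q - 1) / 2) = 1 := by
  subst hcard
  have hF : ringChar F ≠ 2 := by
    rw [Ne, FiniteField.even_card_iff_char_two, hq, ← Nat.even_iff, Nat.not_even_iff_odd]
    exact hpodd.pow
  have hm : (Fintype.card F - 1) / 2 = Fintype.card F / 2 := by
    have := FiniteField.odd_card_of_char_ne_two hF
    omega
  rw [hm]
  exact quadTwist_bijective_iff hF

theorem stmt_3 {F : Type*} [Field F] [Fintype F] (p n t r q : ℕ)
    (hp : p.Prime) (hpodd : Odd p) (hn : 0 < n) (ht : 0 < t) (hr : 0 < r)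
    (hq : q = p ^ n) (hcard : Fintype.card F = q) :
    Function.Bijective
        (fun x : F => (1 - x ^ t) * x ^ ((q - 1) / 2 + r) - x ^ r - x ^ (t + r)) ↔
      Nat.gcd r (q - 1) = 1 ∧ Nat.gcd (t + r) ((q - 1) / 2) = 1 :=
  stmt_3_general p n t r q hpodd hq hcard
end

section
/- Let p be an odd prime, n, t, r positive integers, and q = p^n. If gcd(r, q-1)=1 and gcd(t+r, q-1)=1, then f(x) = (1 - x^t)·x^{(q-1)/2 + r} - x^r - x^{t+r} is a permutation polynomial of F_q. -/
/-!
Put `m = (q - 1) / 2`, so that `x ^ m ∈ {0, 1, -1}`. On the squares (`x ^ m = 1`) the polynomial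
is `-2 x ^ (t + r)`, elsewhere it is `-2 x ^ r`; both exponents are prime to `q - 1`, hence odd, so
`f(x) ^ m = (-2) ^ m x ^ m`. Thus `f` preserves the quadratic character, and on each class it is a
power map that permutes `F`.
-/

open Function

def permPoly {R : Type*} [CommRing R] (m t r : ℕ) (x : R) : R :=
  (1 - x ^ t) * x ^ (m + r) - x ^ r - x ^ (t + r)

section CommRing

variable {R : Type*} [CommRing R] {m t r : ℕ} {x : R}

lemma permPoly_of_pow_eq_one (h : x ^ m = 1) : permPoly m t r x = -2 * x ^ (t + r) := by
  simp only [permPoly, pow_add, h, one_mul]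
  ring

lemma permPoly_of_pow_eq_neg_one (h : x ^ m = -1) : permPoly m t r x = -2 * x ^ r := by
  simp only [permPoly, pow_add, h]
  ring

lemma permPoly_zero (hr : r ≠ 0) : permPoly m t r (0 : R) = -2 * 0 ^ r := by
  simp [permPoly, hr]

end CommRing

namespace FiniteField

variable {F : Type*} [Field F] [Fintype F]

lemma pow_injective_of_coprime {k : ℕ} (hk : k ≠ 0) (hco : k.Coprime (Fintype.card F - 1)) :
    Injective (fun x : F => x ^ k) := by
  classical
  have hunits : (Nat.card Fˣ).Coprime k := by
    rwa [Nat.card_eq_fintype_card, Fintype.card_units, Nat.coprime_comm]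
  intro x y hxy
  simp only at hxy
  rcases eq_or_ne x 0 with rfl | hx
  · exact ((pow_eq_zero_iff hk).mp (hxy.symm.trans (zero_pow hk))).symm
  rcases eq_or_ne y 0 with rfl | hy
  · exact (pow_eq_zero_iff hk).mp (hxy.trans (zero_pow hk))
  have := hunits.pow_left_bijective.injective
    (show Units.mk0 x hx ^ k = Units.mk0 y hy ^ k from Units.ext (by simpa using hxy))
  simpa using congrArg Units.val this

lemma pow_card_div_two_pow_of_odd (hF : ringChar F ≠ 2) {k : ℕ} (hk : Odd k) (x : F) :
    (x ^ (Fintype.card F / 2)) ^ k = x ^ (Fintype.card F / 2) := by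
  rcases eq_or_ne x 0 with rfl | hx
  · have : Fintype.card F / 2 ≠ 0 := by have := Fintype.one_lt_card (α := F); omega
    simp [zero_pow this, zero_pow hk.pos.ne']
  · rcases pow_dichotomy hF hx with h | h <;> rw [h]
    · exact one_pow k
    · exact hk.neg_one_pow

lemma injective_of_eq_mul_pow (hF : ringChar F ≠ 2) {c : F} (hc : c ≠ 0) {a b : ℕ}
    (ha : Odd a) (hb : Odd b) (ha' : Injective (fun x : F => x ^ a))
    (hb' : Injective (fun x : F => x ^ b)) {g : F → F}
    (hga : ∀ x, x ^ (Fintype.card F / 2) = 1 → g x = c * x ^ a)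
    (hgb : ∀ x, x ^ (Fintype.card F / 2) ≠ 1 → g x = c * x ^ b) : Injective g := by
  set m := Fintype.card F / 2
  have hchar : ∀ x, g x ^ m = c ^ m * x ^ m := by
    intro x
    by_cases hx : x ^ m = 1
    · rw [hga x hx, mul_pow, ← pow_mul, mul_comm a, pow_mul, pow_card_div_two_pow_of_odd hF ha]
    · rw [hgb x hx, mul_pow, ← pow_mul, mul_comm b, pow_mul, pow_card_div_two_pow_of_odd hF hb]
  intro x y hxy
  have hm : x ^ m = y ^ m := mul_left_cancel₀ (pow_ne_zero m hc) (by rw [← hchar, ← hchar, hxy])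
  by_cases hx : x ^ m = 1
  · rw [hga x hx, hga y (hm ▸ hx)] at hxy
    exact ha' (mul_left_cancel₀ hc hxy)
  · rw [hgb x hx, hgb y (hm ▸ hx)] at hxy
    exact hb' (mul_left_cancel₀ hc hxy)

lemma permPoly_of_pow_card_div_two_ne_one (hF : ringChar F ≠ 2) {t r : ℕ} (hr : r ≠ 0) {x : F}
    (hx : x ^ (Fintype.card F / 2) ≠ 1) : permPoly (Fintype.card F / 2) t r x = -2 * x ^ r := by
  rcases eq_or_ne x 0 with rfl | hx0
  · exact permPoly_zero hr
  · exact permPoly_of_pow_eq_neg_one ((pow_dichotomy hF hx0).resolve_left hx)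

lemma odd_of_coprime_card_sub_one (hF : ringChar F ≠ 2) {e : ℕ}
    (he : e.Coprime (Fintype.card F - 1)) : Odd e := by
  have := odd_card_of_char_ne_two hF
  exact Nat.Coprime.odd_of_right (he.coprime_dvd_right ⟨Fintype.card F / 2, by omega⟩)

end FiniteField

theorem stmt_4_general {F : Type*} [Field F] [Fintype F] (p n t r q : ℕ)
    (hpodd : Odd p) (hq : q = p ^ n) (hcard : Fintype.card F = q)
    (h1 : Nat.gcd r (q - 1) = 1) (h2 : Nat.gcd (t + r) (q - 1) = 1) :
    Function.Bijective
      (fun x : F => (1 - x ^ t) * x ^ ((q - 1) / 2 + r) - x ^ r - x ^ (t + r)) := by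
  obtain ⟨k, hk⟩ : Odd (Fintype.card F) := hcard ▸ hq ▸ hpodd.pow
  have hF : ringChar F ≠ 2 := fun h => by
    have := FiniteField.even_card_of_char_two h; omega
  have hm : (q - 1) / 2 = Fintype.card F / 2 := by omega
  have hr : r.Coprime (Fintype.card F - 1) := hcard ▸ h1
  have htr : (t + r).Coprime (Fintype.card F - 1) := hcard ▸ h2
  have hr_odd := FiniteField.odd_of_coprime_card_sub_one hF hr
  have htr_odd := FiniteField.odd_of_coprime_card_sub_one hF htr
  rw [← Finite.injective_iff_bijective, hm]
  exact FiniteField.injective_of_eq_mul_pow hF (neg_ne_zero.mpr (Ring.two_ne_zero hF))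
    htr_odd hr_odd
    (FiniteField.pow_injective_of_coprime htr_odd.pos.ne' htr)
    (FiniteField.pow_injective_of_coprime hr_odd.pos.ne' hr)
    (fun _ => permPoly_of_pow_eq_one)
    (fun _ => FiniteField.permPoly_of_pow_card_div_two_ne_one hF hr_odd.pos.ne')

theorem stmt_4 {F : Type*} [Field F] [Fintype F] (p n t r q : ℕ)
    (hp : p.Prime) (hpodd : Odd p) (hn : 0 < n) (ht : 0 < t) (hr : 0 < r)
    (hq : q = p ^ n) (hcard : Fintype.card F = q)
    (h1 : Nat.gcd r (q - 1) = 1) (h2 : Nat.gcd (t + r) (q - 1) = 1) :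
    Function.Bijective
      (fun x : F => (1 - x ^ t) * x ^ ((q - 1) / 2 + r) - x ^ r - x ^ (t + r)) :=
  stmt_4_general p n t r q hpodd hq hcard h1 h2
end

section
/- Let q = 3^n, t a positive integer, α, β, θ ∈ F_q*, and let C_0 (resp. C_1) be the nonzero squares (resp. nonsquares) of F_q. Define f(0)=0, f(x)=α·x^t for x ∈ C_0, and f(x)=β·(x^3 + θx^2 + θ^2 x) for x ∈ C_1. Then f is a bijection of F_q if and only if gcd(t, (q-1)/2)=1, η(θ)=1, and η(α)=η(β), where η is the quadratic character of F_q. -/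
open Function

lemma exists_ne_one_pow_eq_one {G : Type*} [Group G] [Finite G] {d : ℕ} (hd : d ∣ Nat.card G)
    (hd1 : d ≠ 1) : ∃ z : G, z ≠ 1 ∧ z ^ d = 1 := by
  obtain ⟨p, hp, hpd⟩ := Nat.exists_prime_and_dvd hd1
  have : Fact p.Prime := ⟨hp⟩
  obtain ⟨z, hz⟩ := exists_prime_orderOf_dvd_card' p (hpd.trans hd)
  refine ⟨z, fun h ↦ hp.one_lt.ne' ?_, orderOf_dvd_iff_pow_eq_one.mp (hz ▸ hpd)⟩
  rw [← hz, h, orderOf_one]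

lemma ringChar_ne_two_of_charP_three (F : Type*) [Ring F] [CharP F 3] : ringChar F ≠ 2 :=
  (ringChar.eq F 3).trans_ne (by norm_num)

namespace FiniteField

variable {F : Type*} [Field F] [Fintype F]

theorem injOn_pow_nonzero_squares_iff (hF : ringChar F ≠ 2) (t : ℕ) :
    Set.InjOn (· ^ t) {x : F | x ≠ 0 ∧ IsSquare x} ↔ t.gcd (Fintype.card F / 2) = 1 := by
  set m := Fintype.card F / 2
  constructor
  · intro h
    by_contra hd
    have hm : m ∣ Nat.card Fˣ := by
      have := odd_card_of_char_ne_two hF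
      rw [Nat.card_units, Nat.card_eq_fintype_card]
      exact ⟨2, by omega⟩
    obtain ⟨z, hz1, hzd⟩ := exists_ne_one_pow_eq_one ((Nat.gcd_dvd_right t m).trans hm) hd
    obtain ⟨hzt, hzm⟩ := pow_gcd_eq_one.mp hzd
    have hzs : IsSquare (z : F) := (isSquare_iff hF z.ne_zero).mpr <| by
      rw [← Units.val_pow_eq_pow_val, hzm, Units.val_one]
    refine hz1 (Units.ext (h ⟨z.ne_zero, hzs⟩ ⟨one_ne_zero, IsSquare.one⟩ ?_))
    simpa using congrArg Units.val hzt
  · rintro hgcd x ⟨hx0, hx⟩ y ⟨hy0, hy⟩ (hxy : x ^ t = y ^ t)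
    have hz : (x / y) ^ t.gcd m = 1 := by
      refine pow_gcd_eq_one.mpr ⟨?_, (isSquare_iff hF (div_ne_zero hx0 hy0)).mp (hx.div hy)⟩
      rw [div_pow, hxy, div_self (pow_ne_zero _ hy0)]
    rwa [hgcd, pow_one, div_eq_one_iff_eq hy0] at hz

end FiniteField

lemma pow_three_add_mul_sq_add_sq_mul {R : Type*} [CommRing R] [CharP R 3] (x θ : R) :
    x ^ 3 + θ * x ^ 2 + θ ^ 2 * x = x * (x - θ) ^ 2 := by
  have h3 : (3 : R) = 0 := by exact_mod_cast CharP.cast_eq_zero R 3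
  linear_combination θ * x ^ 2 * h3

lemma injOn_mul_sub_sq_nonsquares {F : Type*} [Field F] [CharP F 3] {θ : F} (hθ0 : θ ≠ 0)
    (hθ : IsSquare θ) : Set.InjOn (fun x ↦ x * (x - θ) ^ 2) {x | ¬IsSquare x} := by
  intro x hx y _ (hxy : x * (x - θ) ^ 2 = y * (y - θ) ^ 2)
  have h3 : (3 : F) = 0 := by exact_mod_cast CharP.cast_eq_zero F 3
  have hfactor : (x - y) * ((x - y) ^ 2 + θ * (x + y) + θ ^ 2) = 0 := by
    linear_combination hxy + (x * y ^ 2 - x ^ 2 * y + θ * x ^ 2 - θ * y ^ 2) * h3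
  refine sub_eq_zero.mp ((mul_eq_zero.mp hfactor).resolve_right fun hquad ↦ hx ?_)
  have hθx : θ * x = (x - y + θ) ^ 2 := by linear_combination -hquad + θ * y * h3
  have := (IsSquare.sq (x - y + θ)).div hθ
  rwa [← hθx, mul_div_cancel_left₀ x hθ0] at this

section squareClassMap

variable {F : Type*} [Field F] {α β θ : F} {t : ℕ}

open scoped Classical in
/-- The map `f` of the theorem, with `x³ + θx² + θ²x` written as `x(x - θ)²` (equal in
characteristic 3). The case `x = 0` is separate because `0 ^ 0 = 1`. -/
noncomputable def squareClassMap (α β θ : F) (t : ℕ) (x : F) : F :=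
  if x = 0 then 0 else if IsSquare x then α * x ^ t else β * (x * (x - θ) ^ 2)

@[simp]
lemma squareClassMap_zero : squareClassMap α β θ t 0 = 0 := by
  simp [squareClassMap]

lemma squareClassMap_of_isSquare {x : F} (hx0 : x ≠ 0) (hx : IsSquare x) :
    squareClassMap α β θ t x = α * x ^ t := by
  simp [squareClassMap, hx0, hx]

lemma squareClassMap_of_not_isSquare {x : F} (hx : ¬IsSquare x) :
    squareClassMap α β θ t x = β * (x * (x - θ) ^ 2) := by
  have hx0 : x ≠ 0 := by rintro rfl; exact hx .zero
  simp [squareClassMap, hx0, hx]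

lemma isSquare_of_injective_squareClassMap (hθ0 : θ ≠ 0)
    (h : Injective (squareClassMap α β θ t)) : IsSquare θ := by
  by_contra hθ
  refine hθ0 (h ?_)
  rw [squareClassMap_of_not_isSquare hθ, squareClassMap_zero, sub_self]
  ring

lemma injOn_squareClassMap_nonzero_squares_iff (hα0 : α ≠ 0) :
    Set.InjOn (squareClassMap α β θ t) {x | x ≠ 0 ∧ IsSquare x} ↔
      Set.InjOn (· ^ t) {x : F | x ≠ 0 ∧ IsSquare x} := by
  have hEq : Set.EqOn ((α * ·) ∘ (· ^ t)) (squareClassMap α β θ t) {x | x ≠ 0 ∧ IsSquare x} :=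
    fun x hx ↦ (squareClassMap_of_isSquare hx.1 hx.2).symm
  rw [← hEq.injOn_iff]
  exact ⟨Set.InjOn.of_comp, (mul_right_injective₀ hα0).comp_injOn⟩

lemma injOn_squareClassMap_nonsquares [CharP F 3] (hβ0 : β ≠ 0) (hθ0 : θ ≠ 0) (hθ : IsSquare θ) :
    Set.InjOn (squareClassMap α β θ t) {x | ¬IsSquare x} := by
  have hEq : Set.EqOn ((β * ·) ∘ fun x ↦ x * (x - θ) ^ 2) (squareClassMap α β θ t)
      {x | ¬IsSquare x} :=
    fun x hx ↦ (squareClassMap_of_not_isSquare hx).symm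
  exact ((mul_right_injective₀ hβ0).comp_injOn (injOn_mul_sub_sq_nonsquares hθ0 hθ)).congr hEq

variable [Fintype F] [DecidableEq F]

lemma quadraticChar_squareClassMap (hθ : IsSquare θ) (x : F) :
    quadraticChar F (squareClassMap α β θ t x) =
      (if IsSquare x then quadraticChar F α else quadraticChar F β) * quadraticChar F x := by
  by_cases hx0 : x = 0
  · simp [hx0]
  by_cases hx : IsSquare x
  · rw [squareClassMap_of_isSquare hx0 hx, if_pos hx, map_mul, map_pow,
      (quadraticChar_one_iff_isSquare hx0).mpr hx, one_pow]
  · have hxθ : x - θ ≠ 0 := sub_ne_zero.mpr fun h ↦ hx (h ▸ hθ)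
    rw [squareClassMap_of_not_isSquare hx, if_neg hx, map_mul, map_mul, quadraticChar_sq_one' hxθ,
      mul_one]

lemma quadraticChar_eq_of_surjective_squareClassMap [CharP F 3] (hα0 : α ≠ 0) (hθ : IsSquare θ)
    (h : Surjective (squareClassMap α β θ t)) : quadraticChar F α = quadraticChar F β := by
  obtain ⟨a, ha⟩ := quadraticChar_exists_neg_one (ringChar_ne_two_of_charP_three F)
  obtain ⟨x, hx⟩ := h (a * α)
  have hχx := quadraticChar_squareClassMap (α := α) (β := β) (t := t) hθ x
  rw [hx, map_mul, ha] at hχx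
  have hχα : quadraticChar F α ^ 2 = 1 := by rw [← map_pow, quadraticChar_sq_one' hα0]
  by_cases hxs : IsSquare x
  · rw [if_pos hxs] at hχx
    refine absurd hxs (quadraticChar_neg_one_iff_not_isSquare.mp ?_)
    linear_combination (-quadraticChar F α) * hχx - (1 + quadraticChar F x) * hχα
  · rw [if_neg hxs, quadraticChar_neg_one_iff_not_isSquare.mpr hxs] at hχx
    linarith

lemma injective_squareClassMap [CharP F 3] (hα0 : α ≠ 0) (hβ0 : β ≠ 0) (hθ0 : θ ≠ 0)
    (hgcd : t.gcd (Fintype.card F / 2) = 1) (hθ : IsSquare θ)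
    (hαβ : quadraticChar F α = quadraticChar F β) : Injective (squareClassMap α β θ t) := by
  intro x y hxy
  have hχ : quadraticChar F x = quadraticChar F y := by
    have := congrArg (quadraticChar F) hxy
    rw [quadraticChar_squareClassMap hθ, quadraticChar_squareClassMap hθ, ← hαβ, ite_self,
      ite_self] at this
    exact mul_left_cancel₀ (quadraticChar_eq_zero_iff.not.mpr hα0) this
  rcases eq_or_ne x 0 with rfl | hx0
  · exact (quadraticChar_eq_zero_iff.mp (hχ.symm.trans quadraticChar_zero)).symm
  have hy0 : y ≠ 0 := by
    rwa [Ne, ← quadraticChar_eq_zero_iff, ← hχ, quadraticChar_eq_zero_iff]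
  by_cases hxs : IsSquare x
  · have hys : IsSquare y := by
      rwa [← quadraticChar_one_iff_isSquare hy0, ← hχ, quadraticChar_one_iff_isSquare hx0]
    have hpow := (FiniteField.injOn_pow_nonzero_squares_iff
      (ringChar_ne_two_of_charP_three F) t).mpr hgcd
    exact (injOn_squareClassMap_nonzero_squares_iff hα0).mpr hpow ⟨hx0, hxs⟩ ⟨hy0, hys⟩ hxy
  · have hys : ¬IsSquare y := by
      rwa [← quadraticChar_neg_one_iff_not_isSquare, ← hχ, quadraticChar_neg_one_iff_not_isSquare]
    exact injOn_squareClassMap_nonsquares hβ0 hθ0 hθ hxs hys hxy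

theorem injective_squareClassMap_iff [CharP F 3] (hα0 : α ≠ 0) (hβ0 : β ≠ 0) (hθ0 : θ ≠ 0) :
    Injective (squareClassMap α β θ t) ↔
      t.gcd (Fintype.card F / 2) = 1 ∧ IsSquare θ ∧ quadraticChar F α = quadraticChar F β := by
  refine ⟨fun h ↦ ?_, fun ⟨hgcd, hθ, hαβ⟩ ↦ injective_squareClassMap hα0 hβ0 hθ0 hgcd hθ hαβ⟩
  have hθ := isSquare_of_injective_squareClassMap hθ0 h
  refine ⟨?_, hθ, quadraticChar_eq_of_surjective_squareClassMap hα0 hθ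
    (Finite.surjective_of_injective h)⟩
  rw [← FiniteField.injOn_pow_nonzero_squares_iff (ringChar_ne_two_of_charP_three F),
    ← injOn_squareClassMap_nonzero_squares_iff hα0]
  exact h.injOn

end squareClassMap

theorem stmt_6_general {F : Type*} [Field F] [Fintype F] (n t q : ℕ)
    (hq : q = 3 ^ n) (hcard : Fintype.card F = q)
    (α β θ : F) (hα : α ≠ 0) (hβ : β ≠ 0) (hθ : θ ≠ 0)
    (f : F → F) (hf0 : f 0 = 0)
    (hfsq : ∀ x : F, x ≠ 0 → IsSquare x → f x = α * x ^ t)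
    (hfns : ∀ x : F, ¬ IsSquare x → f x = β * (x ^ 3 + θ * x ^ 2 + θ ^ 2 * x)) :
    Function.Bijective f ↔
      Nat.gcd t ((q - 1) / 2) = 1 ∧ quadChar θ = 1 ∧ quadChar α = quadChar β := by
  classical
  have : Fact (Nat.Prime 3) := ⟨Nat.prime_three⟩
  have : CharP F 3 := charP_of_card_eq_prime_pow (hcard.trans hq)
  have hf : f = squareClassMap α β θ t := by
    funext x
    by_cases hx0 : x = 0
    · rw [hx0, hf0, squareClassMap_zero]
    by_cases hx : IsSquare x
    · rw [hfsq x hx0 hx, squareClassMap_of_isSquare hx0 hx]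
    · rw [hfns x hx, squareClassMap_of_not_isSquare hx, pow_three_add_mul_sq_add_sq_mul]
  have hm : (q - 1) / 2 = Fintype.card F / 2 := by
    have := FiniteField.odd_card_of_char_ne_two (ringChar_ne_two_of_charP_three F)
    omega
  simp only [quadChar_eq_quadraticChar, quadraticChar_one_iff_isSquare hθ]
  rw [hf, ← Finite.injective_iff_bijective, injective_squareClassMap_iff hα hβ hθ, hm]

theorem stmt_6 {F : Type*} [Field F] [Fintype F] (n t q : ℕ)
    (hn : 0 < n) (ht : 0 < t) (hq : q = 3 ^ n) (hcard : Fintype.card F = q)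
    (α β θ : F) (hα : α ≠ 0) (hβ : β ≠ 0) (hθ : θ ≠ 0)
    (f : F → F) (hf0 : f 0 = 0)
    (hfsq : ∀ x : F, x ≠ 0 → IsSquare x → f x = α * x ^ t)
    (hfns : ∀ x : F, ¬ IsSquare x → f x = β * (x ^ 3 + θ * x ^ 2 + θ ^ 2 * x)) :
    Function.Bijective f ↔
      Nat.gcd t ((q - 1) / 2) = 1 ∧ quadChar θ = 1 ∧ quadChar α = quadChar β :=
  stmt_6_general n t q hq hcard α β θ hα hβ hθ f hf0 hfsq hfns
end

section
/- For any positive integer n and non-negative integer i, the polynomial f(x) = x^{(3^n-1)/2 + 3^i} + 2x^{(3^n-1)/2 + 3} + 2x^{(3^n-1)/2 + 2} + 2x^{(3^n-1)/2 + 1} + x^{3^i} + x^3 + x^2 + x is a permutation polynomial of F_{3^n}. -/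
/-!
Let `s = (q - 1) / 2`, so that `x ^ s` is `1` on nonzero squares and `-1` on non-squares. As
`2 = -1` and `x ^ 3 + x ^ 2 + x = x (x - 1) ^ 2` in characteristic 3, the polynomial equals
`-x ^ (3 ^ i)` on squares and `-x (x - 1) ^ 2` on non-squares. In both cases `f x ^ s = (-1) ^ s x ^ s`,
so `f` preserves the quadratic character up to a fixed sign and it suffices to check injectivity
on each class. On squares `f` is a negated power of Frobenius. On non-squares,
`a (a - 1) ^ 2 = b (b - 1) ^ 2` with `a ≠ b` forces `a = (a - b + 1) ^ 2`, which is a square.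
-/

namespace PermutationPolynomial

def f {R : Type*} [Semiring R] (s i : ℕ) (x : R) : R :=
  x ^ (s + 3 ^ i) + 2 * x ^ (s + 3) + 2 * x ^ (s + 2) + 2 * x ^ (s + 1) +
    x ^ (3 ^ i) + x ^ 3 + x ^ 2 + x

section CharThree

variable {R : Type*} [CommRing R] [CharP R 3]

lemma ringChar_ne_two : ringChar R ≠ 2 := by
  rw [ringChar.eq R 3]
  norm_num

lemma f_eq_of_pow_eq_one {s i : ℕ} {x : R} (hx : x ^ s = 1) : f s i x = -x ^ 3 ^ i := by
  have h3 : (3 : R) = 0 := CharP.cast_eq_zero R 3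
  simp only [f, pow_add, hx]
  linear_combination (x ^ 3 ^ i + x ^ 3 + x ^ 2 + x) * h3

lemma f_eq_of_pow_eq_neg_one {s i : ℕ} {x : R} (hx : x ^ s = -1) :
    f s i x = -(x * (x - 1) ^ 2) := by
  have h3 : (3 : R) = 0 := CharP.cast_eq_zero R 3
  simp only [f, pow_add, hx]
  linear_combination (-x ^ 2) * h3

lemma eq_or_eq_sq_of_mul_sub_one_sq_eq [IsDomain R] {a b : R}
    (h : a * (a - 1) ^ 2 = b * (b - 1) ^ 2) : a = b ∨ a = (a - b + 1) ^ 2 := by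
  have h3 : (3 : R) = 0 := CharP.cast_eq_zero R 3
  have hfac : (a - b) * ((a - b) ^ 2 + a + b + 1) = 0 := by
    linear_combination h + (a * b ^ 2 - a ^ 2 * b + a ^ 2 - b ^ 2) * h3
  rcases mul_eq_zero.mp hfac with hab | hab
  · exact .inl (sub_eq_zero.mp hab)
  · exact .inr (by linear_combination -hab + b * h3)

end CharThree

section FiniteField

variable {F : Type*} [Field F] [Fintype F]

lemma card_div_two_ne_zero : Fintype.card F / 2 ≠ 0 :=
  (Nat.div_pos Fintype.one_lt_card two_pos).ne'

lemma sq_pow_card_div_two (hF : ringChar F ≠ 2) {y : F} (hy : y ≠ 0) :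
    (y ^ 2) ^ (Fintype.card F / 2) = 1 :=
  (FiniteField.isSquare_iff hF (pow_ne_zero 2 hy)).mp (IsSquare.sq y)

variable [CharP F 3]

lemma f_pow_card_div_two (i : ℕ) (x : F) :
    f (Fintype.card F / 2) i x ^ (Fintype.card F / 2) =
      (-1) ^ (Fintype.card F / 2) * x ^ (Fintype.card F / 2) := by
  set s := Fintype.card F / 2
  rcases eq_or_ne x 0 with rfl | hx
  · have hs : s ≠ 0 := card_div_two_ne_zero
    simp [f, hs]
  rcases FiniteField.pow_dichotomy ringChar_ne_two hx with h | h
  · rw [f_eq_of_pow_eq_one h, neg_pow, ← pow_mul, mul_comm (3 ^ i), pow_mul, h, one_pow]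
  · have hx1 : x - 1 ≠ 0 := by
      rintro hx1
      rw [sub_eq_zero.mp hx1, one_pow] at h
      exact Ring.neg_one_ne_one_of_char_ne_two ringChar_ne_two h.symm
    rw [f_eq_of_pow_eq_neg_one h, neg_pow, mul_pow, h, sq_pow_card_div_two ringChar_ne_two hx1]
    ring

lemma injective_f (i : ℕ) : Function.Injective (f (Fintype.card F / 2) i : F → F) := by
  intro a b hab
  set s := Fintype.card F / 2
  have hs : a ^ s = b ^ s := by
    have := congrArg (· ^ s) hab
    rw [f_pow_card_div_two, f_pow_card_div_two] at this
    exact mul_left_cancel₀ (pow_ne_zero _ (neg_ne_zero.mpr one_ne_zero)) this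
  rcases eq_or_ne a 0 with rfl | ha
  · rw [zero_pow card_div_two_ne_zero, eq_comm, pow_eq_zero_iff card_div_two_ne_zero] at hs
    exact hs.symm
  rcases FiniteField.pow_dichotomy ringChar_ne_two ha with h | h
  · rw [f_eq_of_pow_eq_one h, f_eq_of_pow_eq_one (hs ▸ h), neg_inj] at hab
    exact iterateFrobenius_inj F 3 i (by simpa only [iterateFrobenius_def] using hab)
  · rw [f_eq_of_pow_eq_neg_one h, f_eq_of_pow_eq_neg_one (hs ▸ h), neg_inj] at hab
    refine (eq_or_eq_sq_of_mul_sub_one_sq_eq hab).resolve_right fun ha_sq => ?_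
    have hab1 : a - b + 1 ≠ 0 := by
      rintro hab1
      rw [hab1] at ha_sq
      exact ha (by simpa using ha_sq)
    rw [ha_sq, sq_pow_card_div_two ringChar_ne_two hab1] at h
    exact Ring.neg_one_ne_one_of_char_ne_two ringChar_ne_two h.symm

end FiniteField

end PermutationPolynomial

open PermutationPolynomial in
theorem stmt_7_general {F : Type*} [Field F] [Fintype F] (n i : ℕ)
    (hcard : Fintype.card F = 3 ^ n) :
    Function.Bijective (fun x : F =>
      x ^ ((3 ^ n - 1) / 2 + 3 ^ i) + 2 * x ^ ((3 ^ n - 1) / 2 + 3) +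
        2 * x ^ ((3 ^ n - 1) / 2 + 2) + 2 * x ^ ((3 ^ n - 1) / 2 + 1) +
        x ^ (3 ^ i) + x ^ 3 + x ^ 2 + x) := by
  have : CharP F 3 := charP_of_card_eq_prime_pow hcard
  have hs : (3 ^ n - 1) / 2 = Fintype.card F / 2 := by
    obtain ⟨k, hk⟩ : Odd (3 ^ n) := Odd.pow (by decide)
    omega
  rw [hs]
  exact Finite.injective_iff_bijective.mp (injective_f i)

theorem stmt_7 {F : Type*} [Field F] [Fintype F] (n i : ℕ) (hn : 0 < n)
    (hcard : Fintype.card F = 3 ^ n) :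
    Function.Bijective (fun x : F =>
      x ^ ((3 ^ n - 1) / 2 + 3 ^ i) + 2 * x ^ ((3 ^ n - 1) / 2 + 3) +
        2 * x ^ ((3 ^ n - 1) / 2 + 2) + 2 * x ^ ((3 ^ n - 1) / 2 + 1) +
        x ^ (3 ^ i) + x ^ 3 + x ^ 2 + x) :=
  stmt_7_general n i hcard
end

section
/- For any even positive integer e, the polynomial f(x) = (1 - x - x^2)·x^{(3^e+1)/2} - 1 - x + x^2 is a permutation polynomial of F_{3^e}. -/
/-!
Write `q = 3^e`. Since `x^((q+1)/2) = x · x^((q-1)/2)` and Euler's criterion gives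
`x^((q-1)/2) = ±1`, in characteristic 3 the polynomial is `-x³ - 1` on squares (including 0)
and `x (x + 1)² - 1` on nonsquares. As `e` is even, `q ≡ 1 (mod 4)`, so `-1` is a square.
The first branch is injective by Frobenius; a collision in the second branch would make `-a`,
hence `a`, a square; and a value `-b³` of the first branch is a square while `a (a + 1)²` is
not, so the two branches have disjoint images.
-/

theorem FiniteField.pow_card_div_two_add_one {F : Type*} [Field F] [Fintype F]
    [DecidablePred (IsSquare : F → Prop)] (hF : ringChar F ≠ 2) (x : F) :
    x ^ (Fintype.card F / 2 + 1) = if IsSquare x then x else -x := by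
  rcases eq_or_ne x 0 with rfl | hx
  · simp
  rw [pow_succ]
  split_ifs with hsq
  · rw [(FiniteField.isSquare_iff hF hx).mp hsq, one_mul]
  · have hpow := (FiniteField.pow_dichotomy hF hx).resolve_left
      (mt (FiniteField.isSquare_iff hF hx).mpr hsq)
    rw [hpow, neg_one_mul]

theorem neg_cube_ne_mul_add_one_sq {F : Type*} [Field F] (h1 : IsSquare (-1 : F)) {a b : F}
    (ha : ¬IsSquare a) (hb : IsSquare b) : -b ^ 3 ≠ a * (a + 1) ^ 2 := by
  intro h
  have ha1 : a + 1 ≠ 0 := fun h0 => ha (by rwa [eq_neg_of_add_eq_zero_left h0])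
  have hsq : IsSquare (a * (a + 1) ^ 2) := by
    rw [← h, neg_eq_neg_one_mul, pow_succ]
    exact h1.mul ((IsSquare.sq b).mul hb)
  have := hsq.div (IsSquare.sq (a + 1))
  rw [mul_div_assoc, div_self (pow_ne_zero 2 ha1), mul_one] at this
  exact ha this

section CharThree

variable {F : Type*} [Field F] [CharP F 3]

theorem eq_of_mul_add_one_sq_eq (h1 : IsSquare (-1 : F)) {a b : F} (ha : ¬IsSquare a)
    (h : a * (a + 1) ^ 2 = b * (b + 1) ^ 2) : a = b := by
  have h3 : (3 : F) = 0 := CharP.cast_eq_zero F 3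
  by_contra hne
  have hquad : (a - b) ^ 2 - (a + b) + 1 = 0 := by
    refine (mul_eq_zero.mp ?_).resolve_left (sub_ne_zero.mpr hne)
    linear_combination h + (b ^ 2 - a ^ 2 + a * b ^ 2 - a ^ 2 * b) * h3
  have hneg : -a = (a - b - 1) ^ 2 := by linear_combination -hquad + (-b) * h3
  have hsq : IsSquare (-a) := ⟨a - b - 1, by rw [hneg, sq]⟩
  exact ha (by simpa using h1.mul hsq)

theorem injective_ite_isSquare [DecidablePred (IsSquare : F → Prop)] (h1 : IsSquare (-1 : F)) :
    Function.Injective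
      (fun x : F => if IsSquare x then -x ^ 3 - 1 else x * (x + 1) ^ 2 - 1) := by
  intro a b hab
  by_cases ha : IsSquare a <;> by_cases hb : IsSquare b <;>
    simp only [ha, hb, if_true, if_false] at hab
  · exact frobenius_inj F 3 (by simp only [frobenius_def]; linear_combination -hab)
  · exact absurd (by linear_combination hab) (neg_cube_ne_mul_add_one_sq h1 hb ha)
  · exact absurd (by linear_combination -hab) (neg_cube_ne_mul_add_one_sq h1 ha hb)
  · exact eq_of_mul_add_one_sq_eq h1 ha (by linear_combination hab)

theorem poly_eq_ite_isSquare [Fintype F] [DecidablePred (IsSquare : F → Prop)] (x : F) :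
    (1 - x - x ^ 2) * x ^ (Fintype.card F / 2 + 1) - 1 - x + x ^ 2
      = if IsSquare x then -x ^ 3 - 1 else x * (x + 1) ^ 2 - 1 := by
  have h3 : (3 : F) = 0 := CharP.cast_eq_zero F 3
  rw [FiniteField.pow_card_div_two_add_one (by rw [ringChar.eq F 3]; decide)]
  split_ifs
  · ring
  · linear_combination (-x) * h3

end CharThree

theorem stmt_8_general {F : Type*} [Field F] [Fintype F] (e : ℕ) (heven : Even e)
    (hcard : Fintype.card F = 3 ^ e) :
    Function.Bijective
      (fun x : F => (1 - x - x ^ 2) * x ^ ((3 ^ e + 1) / 2) - 1 - x + x ^ 2) := by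
  classical
  have : Fact (Nat.Prime 3) := ⟨Nat.prime_three⟩
  have : CharP F 3 := charP_of_card_eq_prime_pow hcard
  have h1 : IsSquare (-1 : F) := by
    obtain ⟨k, rfl⟩ := heven
    rw [FiniteField.isSquare_neg_one_iff, hcard, ← two_mul, pow_mul, Nat.pow_mod]
    norm_num
  have hexp : (3 ^ e + 1) / 2 = Fintype.card F / 2 + 1 := by
    have hodd : 3 ^ e % 2 = 1 := Nat.odd_iff.mp (Odd.pow (by decide))
    omega
  rw [← Finite.injective_iff_bijective, hexp]
  simpa only [poly_eq_ite_isSquare] using injective_ite_isSquare h1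

theorem stmt_8 {F : Type*} [Field F] [Fintype F] (e : ℕ) (he : 0 < e) (heven : Even e)
    (hcard : Fintype.card F = 3 ^ e) :
    Function.Bijective
      (fun x : F => (1 - x - x ^ 2) * x ^ ((3 ^ e + 1) / 2) - 1 - x + x ^ 2) :=
  stmt_8_general e heven hcard
end

section
/- For any positive integer n, the polynomial f(x) = x^{(3^n-1)/2 + 2} + x^{(3^n-1)/2 + 1} + x^3 + 2x^2 + 2x is a permutation polynomial of F_{3^n}. -/
/-!
Write `q = 3 ^ n` and `m = (q - 1) / 2`, so that `x ^ m` is the quadratic character of `x`. In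
characteristic `3` the polynomial collapses to `x ^ 3` on the squares (including `0`) and to
`x * (x - 1) ^ 2` on the non-squares. The Frobenius `x ↦ x ^ 3` permutes the squares, while
`x * (x - 1) ^ 2` maps non-squares to non-squares injectively: a collision
`x * (x - 1) ^ 2 = y * (y - 1) ^ 2` with `x ≠ y` forces `x = (x - y + 1) ^ 2`.
-/

theorem not_isSquare_mul_sub_one_sq {F : Type*} [Field F] {x : F} (hx : ¬IsSquare x) :
    ¬IsSquare (x * (x - 1) ^ 2) := by
  have hx1 : x - 1 ≠ 0 := sub_ne_zero.mpr fun h => hx (h ▸ IsSquare.one)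
  rintro ⟨r, hr⟩
  refine hx ⟨r / (x - 1), ?_⟩
  field_simp
  linear_combination hr

section CharThree

variable {F : Type*} [Field F] [CharP F 3]

theorem isSquare_of_mul_sub_one_sq_eq {x y : F} (hxy : x ≠ y)
    (h : x * (x - 1) ^ 2 = y * (y - 1) ^ 2) : IsSquare x := by
  have h3 : (3 : F) = 0 := by exact_mod_cast CharP.cast_eq_zero F 3
  have hfactor : (x - y) * ((x - y) ^ 2 + x + y + 1) = 0 := by
    linear_combination h + (x * y ^ 2 + x ^ 2 - x ^ 2 * y - y ^ 2) * h3
  have hquad : (x - y) ^ 2 + x + y + 1 = 0 :=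
    (mul_eq_zero.mp hfactor).resolve_left (sub_ne_zero.mpr hxy)
  exact ⟨x - y + 1, by linear_combination -hquad + y * h3⟩

theorem bijective_ite_isSquare_pow_three [Finite F] [DecidablePred (IsSquare : F → Prop)] :
    Function.Bijective (fun x : F => if IsSquare x then x ^ 3 else x * (x - 1) ^ 2) := by
  refine Finite.injective_iff_bijective.mp fun x y h => ?_
  by_cases hx : IsSquare x <;> by_cases hy : IsSquare y <;>
    simp only [hx, hy, if_true, if_false] at h
  · exact frobenius_inj F 3 h
  · exact absurd (h ▸ hx.pow 3) (not_isSquare_mul_sub_one_sq hy)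
  · exact absurd (h ▸ hy.pow 3) (not_isSquare_mul_sub_one_sq hx)
  · by_contra hxy
    exact hx (isSquare_of_mul_sub_one_sq_eq hxy h)

variable [Fintype F]

theorem pow_add_two_add_pow_add_one_add_eq_ite [DecidablePred (IsSquare : F → Prop)] (x : F) :
    x ^ (Fintype.card F / 2 + 2) + x ^ (Fintype.card F / 2 + 1) + x ^ 3 + 2 * x ^ 2 + 2 * x =
      if IsSquare x then x ^ 3 else x * (x - 1) ^ 2 := by
  have h3 : (3 : F) = 0 := by exact_mod_cast CharP.cast_eq_zero F 3
  have hF : ringChar F ≠ 2 := by rw [ringChar.eq F 3]; decide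
  rcases eq_or_ne x 0 with rfl | hx0
  · simp
  simp only [pow_add _ (Fintype.card F / 2)]
  rcases FiniteField.pow_dichotomy hF hx0 with hχ | hχ
  · rw [if_pos ((FiniteField.isSquare_iff hF hx0).mpr hχ), hχ]
    linear_combination (x ^ 2 + x) * h3
  · have hsq : ¬IsSquare x := by
      rw [FiniteField.isSquare_iff hF hx0, hχ]
      intro h
      exact one_ne_zero (by linear_combination h3 + h)
    rw [if_neg hsq, hχ]
    linear_combination x ^ 2 * h3

theorem bijective_pow_card_sub_one_div_two_add_two_add :
    Function.Bijective (fun x : F =>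
      x ^ ((Fintype.card F - 1) / 2 + 2) + x ^ ((Fintype.card F - 1) / 2 + 1) +
        x ^ 3 + 2 * x ^ 2 + 2 * x) := by
  classical
  have hodd := FiniteField.odd_card_of_char_ne_two (F := F) (by rw [ringChar.eq F 3]; decide)
  have hm : (Fintype.card F - 1) / 2 = Fintype.card F / 2 := by omega
  simp only [hm, pow_add_two_add_pow_add_one_add_eq_ite]
  exact bijective_ite_isSquare_pow_three

end CharThree

theorem stmt_9_general {F : Type*} [Field F] [Fintype F] (n : ℕ)
    (hcard : Fintype.card F = 3 ^ n) :
    Function.Bijective (fun x : F =>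
      x ^ ((3 ^ n - 1) / 2 + 2) + x ^ ((3 ^ n - 1) / 2 + 1) +
        x ^ 3 + 2 * x ^ 2 + 2 * x) := by
  have : CharP F 3 := charP_of_card_eq_prime_pow hcard
  rw [← hcard]
  exact bijective_pow_card_sub_one_div_two_add_two_add

theorem stmt_9 {F : Type*} [Field F] [Fintype F] (n : ℕ) (hn : 0 < n)
    (hcard : Fintype.card F = 3 ^ n) :
    Function.Bijective (fun x : F =>
      x ^ ((3 ^ n - 1) / 2 + 2) + x ^ ((3 ^ n - 1) / 2 + 1) +
        x ^ 3 + 2 * x ^ 2 + 2 * x) :=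
  stmt_9_general n hcard
end

section
/- Let q = 3^n and θ ∈ F_q* with η(θ) = 1. Then the map sending 0 to 0, x to x(x-θ)^2 on the set C_1 of nonsquares of F_q is injective on C_1; more precisely, for x, y ∈ C_1, x(x-θ)^2 = y(y-θ)^2 implies x = y. -/
/-! In characteristic 3 one has `x (x - θ)² = x³ + θx² + θ²x`, and the difference of its values
at `x` and `y` factors as `(x - y) ((x - θ - y)² - θ y)`. So a collision `x ≠ y` forces `θ y` to be
a square, which is impossible when `θ` is a nonzero square and `y` is a nonsquare. -/

section CharThree

variable {R : Type*} [CommRing R] [CharP R 3]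

theorem mul_sub_sq_sub_mul_sub_sq_of_charP_three (x y θ : R) :
    x * (x - θ) ^ 2 - y * (y - θ) ^ 2 = (x - y) * ((x - θ - y) ^ 2 - θ * y) := by
  have h3 : (3 : R) = 0 := CharP.cast_eq_zero R 3
  linear_combination (y ^ 2 * θ - x * y * θ + x ^ 2 * y - x * y ^ 2) * h3

theorem sq_sub_sub_eq_mul_of_mul_sub_sq_eq [IsDomain R] {x y θ : R} (hxy : x ≠ y)
    (h : x * (x - θ) ^ 2 = y * (y - θ) ^ 2) : (x - θ - y) ^ 2 = θ * y := by
  have hprod : (x - y) * ((x - θ - y) ^ 2 - θ * y) = 0 := by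
    rw [← mul_sub_sq_sub_mul_sub_sq_of_charP_three, h, sub_self]
  exact sub_eq_zero.mp ((mul_eq_zero.mp hprod).resolve_left (sub_ne_zero.mpr hxy))

end CharThree

theorem IsSquare.of_mul_left {K : Type*} [Field K] {θ y : K} (hθ : θ ≠ 0) (hθsq : IsSquare θ)
    (h : IsSquare (θ * y)) : IsSquare y := by
  simpa [hθ] using h.div hθsq

theorem stmt_14_general {F : Type*} [Field F] [Fintype F] (n : ℕ)
    (hcard : Fintype.card F = 3 ^ n)
    (θ : F) (hθ : θ ≠ 0) (hθsq : IsSquare θ) :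
    ∀ x y : F, ¬ IsSquare x → ¬ IsSquare y →
      x * (x - θ) ^ 2 = y * (y - θ) ^ 2 → x = y := by
  intro x y _ hy heq
  have : CharP F 3 := charP_of_card_eq_prime_pow hcard
  by_contra hxy
  exact hy (hθsq.of_mul_left hθ ⟨x - θ - y, by rw [← sq_sub_sub_eq_mul_of_mul_sub_sq_eq hxy heq, sq]⟩)

theorem stmt_14 {F : Type*} [Field F] [Fintype F] (n : ℕ) (hn : 0 < n)
    (hcard : Fintype.card F = 3 ^ n)
    (θ : F) (hθ : θ ≠ 0) (hθsq : IsSquare θ) :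
    ∀ x y : F, ¬ IsSquare x → ¬ IsSquare y →
      x * (x - θ) ^ 2 = y * (y - θ) ^ 2 → x = y :=
  stmt_14_general n hcard θ hθ hθsq
end

section
/- Let q be a prime power with q ≡ 1 (mod 3), s = (q-1)/3, and ζ ∈ F_q an element of order 3. Suppose p (the characteristic) and s satisfy either (p ≡ 1 mod 3 and s ≡ 1 mod 3) or (p ≡ 2 mod 3 and s ≡ 2 mod 3). Then f(x) = x(x^s - ζ)(x^s - ζ^2) + x^3(x^s - 1)(x^s - ζ^2) + ζ·x^p(x^s - 1)(x^s - ζ) is a permutation polynomial of F_q; moreover these conditions on p and s are also necessary. -/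
/-!
Write `χ(x) = x ^ s`: on `Fˣ` it takes the values `1, ζ, ζ²`, one on each coset of the cubes.
Since `ζ ^ 2 + ζ + 1 = 0`, the polynomial `f` equals `3x`, `3ζ²x³` and `3ζ²xᵖ` on these three
cosets. If `p ≡ s ≢ 0 (mod 3)`, then `χ(f x) = 3ˢ χ(x)^(2s)` and `u ↦ u^(2s)` is an involution
of the cube roots of unity, so `f x = f y` puts `x` and `y` in the same coset, where each of the
three monomials is injective. Conversely, if `3 ∣ s` then `ζ` is a cube, so `x` and `ζx` lie in
the coset `χ = ζ` and have the same value `3ζ²x³`; if `3 ∣ s + p` then an `x` with `χ(x) = ζ²`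
and `ζ²xᵖ`, for which `χ = 1`, have the same value.
-/

open Function

section CommRing

variable {R : Type*} [CommRing R]

def piecewiseMonomial (s p : ℕ) (ζ x : R) : R :=
  x * (x ^ s - ζ) * (x ^ s - ζ ^ 2) + x ^ 3 * (x ^ s - 1) * (x ^ s - ζ ^ 2) +
    ζ * x ^ p * (x ^ s - 1) * (x ^ s - ζ)

variable {s p : ℕ} {ζ x : R}

theorem piecewiseMonomial_zero (hs : s ≠ 0) (hp : p ≠ 0) : piecewiseMonomial s p ζ 0 = 0 := by
  simp [piecewiseMonomial, zero_pow hs, zero_pow hp]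

theorem piecewiseMonomial_of_pow_eq_one (hζ : ζ ^ 2 + ζ + 1 = 0) (hx : x ^ s = 1) :
    piecewiseMonomial s p ζ x = 3 * x := by
  rw [piecewiseMonomial, hx]
  linear_combination x * (ζ - 2) * hζ

theorem piecewiseMonomial_of_pow_eq (hζ : ζ ^ 2 + ζ + 1 = 0) (hx : x ^ s = ζ) :
    piecewiseMonomial s p ζ x = 3 * ζ ^ 2 * x ^ 3 := by
  rw [piecewiseMonomial, hx]
  linear_combination -x ^ 3 * ζ * hζ

theorem piecewiseMonomial_of_pow_eq_sq (hζ : ζ ^ 2 + ζ + 1 = 0) (hx : x ^ s = ζ ^ 2) :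
    piecewiseMonomial s p ζ x = 3 * ζ ^ 2 * x ^ p := by
  rw [piecewiseMonomial, hx]
  linear_combination x ^ p * ζ ^ 2 * (ζ - 2) * hζ

end CommRing

theorem pow_pow_eq_self_of_pow_eq_one {M : Type*} [Monoid M] {u : M} {n k : ℕ} (hu : u ^ n = 1)
    (hk : k * k % n = 1) : (u ^ k) ^ k = u := by
  rw [← pow_mul, pow_eq_pow_mod _ hu, hk, pow_one]

section Field

variable {F : Type*} [Field F] {ζ : F}

theorem IsPrimitiveRoot.sq_add_self_add_one (hζ : IsPrimitiveRoot ζ 3) : ζ ^ 2 + ζ + 1 = 0 := by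
  have h := hζ.geom_sum_eq_zero (by norm_num)
  simp only [Finset.sum_range_succ, Finset.sum_range_zero] at h
  linear_combination h

theorem IsPrimitiveRoot.three_ne_zero (hζ : IsPrimitiveRoot ζ 3) : (3 : F) ≠ 0 := by
  exact_mod_cast hζ.neZero'.out

theorem IsPrimitiveRoot.eq_one_or_eq_or_eq_sq (hζ : IsPrimitiveRoot ζ 3) {u : F}
    (hu : u ^ 3 = 1) : u = 1 ∨ u = ζ ∨ u = ζ ^ 2 := by
  obtain ⟨i, hi, rfl⟩ := hζ.eq_pow_of_pow_eq_one hu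
  interval_cases i <;> simp

theorem eq_of_pow_three_eq_of_pow_eq (hζ : IsPrimitiveRoot ζ 3) {s : ℕ} (hs : ¬ 3 ∣ s)
    {x y : F} (hy : y ≠ 0) (h3 : x ^ 3 = y ^ 3) (h : x ^ s = y ^ s) : x = y := by
  obtain ⟨i, hi, hζi⟩ := hζ.eq_pow_of_pow_eq_one (ξ := x / y)
    (by rw [div_pow, h3, div_self (pow_ne_zero 3 hy)])
  have hi0 : i = 0 := by
    have h1 : ζ ^ (i * s) = 1 := by rw [pow_mul, hζi, div_pow, h, div_self (pow_ne_zero s hy)]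
    have := Nat.prime_three.dvd_mul.1 ((hζ.pow_eq_one_iff_dvd _).1 h1)
    omega
  rwa [hi0, pow_zero, eq_comm, div_eq_one_iff_eq hy] at hζi

section Finite

variable [Fintype F] {s p : ℕ}

theorem pos_of_card_eq_three_mul_add_one (hcard : Fintype.card F = 3 * s + 1) : 0 < s := by
  have := Fintype.one_lt_card (α := F)
  omega

theorem pow_pow_three_eq_one (hcard : Fintype.card F = 3 * s + 1) {x : F} (hx : x ≠ 0) :
    (x ^ s) ^ 3 = 1 := by
  rw [← pow_mul, ← FiniteField.pow_card_sub_one_eq_one x hx, hcard, mul_comm]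
  rfl

theorem exists_pow_eq_of_pow_three_eq_one (hcard : Fintype.card F = 3 * s + 1) (hζ : ζ ^ 3 = 1) :
    ∃ w : F, w ^ s = ζ := by
  classical
  obtain ⟨g, hg⟩ := IsCyclic.exists_ofOrder_eq_natCard (α := Fˣ)
  have hg' : IsPrimitiveRoot (g : F) (3 * s) := by
    rw [IsPrimitiveRoot.coe_units_iff, ← Nat.add_sub_cancel (3 * s) 1, ← hcard,
      ← Fintype.card_units, ← Nat.card_eq_fintype_card, ← hg]
    exact IsPrimitiveRoot.orderOf g
  have hs : 0 < 3 * s := by have := pos_of_card_eq_three_mul_add_one hcard; omega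
  obtain ⟨i, -, hi⟩ := (hg'.pow hs (mul_comm 3 s)).eq_pow_of_pow_eq_one hζ
  exact ⟨(g : F) ^ i, by rw [← pow_mul, mul_comm, pow_mul, hi]⟩

theorem pow_piecewiseMonomial (hcard : Fintype.card F = 3 * s + 1) (hζ : IsPrimitiveRoot ζ 3)
    (hps : p % 3 = s % 3) {x : F} (hx : x ≠ 0) :
    piecewiseMonomial s p ζ x ^ s = 3 ^ s * (x ^ s) ^ (2 * s) := by
  have h := hζ.sq_add_self_add_one
  have hpow : ζ ^ p = ζ ^ s := by
    rw [pow_eq_pow_mod p hζ.pow_eq_one, pow_eq_pow_mod s hζ.pow_eq_one, hps]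
  rcases hζ.eq_one_or_eq_or_eq_sq (pow_pow_three_eq_one hcard hx) with hxs | hxs | hxs
  · rw [piecewiseMonomial_of_pow_eq_one h hxs, mul_pow, hxs, one_pow]
  · rw [piecewiseMonomial_of_pow_eq h hxs]
    calc _ = 3 ^ s * (ζ ^ s) ^ 2 * (x ^ s) ^ 3 := by ring
      _ = _ := by rw [hxs, hζ.pow_eq_one]; ring
  · rw [piecewiseMonomial_of_pow_eq_sq h hxs]
    calc _ = 3 ^ s * (ζ ^ s) ^ 2 * (x ^ s) ^ p := by ring
      _ = 3 ^ s * (ζ ^ s) ^ 2 * (ζ ^ p) ^ 2 := by rw [hxs]; ring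
      _ = _ := by rw [hpow, hxs]; ring

theorem piecewiseMonomial_ne_zero (hcard : Fintype.card F = 3 * s + 1)
    (hζ : IsPrimitiveRoot ζ 3) (hps : p % 3 = s % 3) {x : F} (hx : x ≠ 0) :
    piecewiseMonomial s p ζ x ≠ 0 := fun h0 ↦ by
  have h := pow_piecewiseMonomial hcard hζ hps hx
  rw [h0, zero_pow (pos_of_card_eq_three_mul_add_one hcard).ne'] at h
  exact mul_ne_zero (pow_ne_zero s hζ.three_ne_zero) (pow_ne_zero _ (pow_ne_zero s hx)) h.symm

theorem pow_eq_pow_of_piecewiseMonomial_eq (hcard : Fintype.card F = 3 * s + 1)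
    (hζ : IsPrimitiveRoot ζ 3) (hs : ¬ 3 ∣ s) (hps : p % 3 = s % 3) {x y : F} (hx : x ≠ 0)
    (hy : y ≠ 0) (hxy : piecewiseMonomial s p ζ x = piecewiseMonomial s p ζ y) :
    x ^ s = y ^ s := by
  have hk : 2 * s * (2 * s) % 3 = 1 := by
    rcases (by omega : s % 3 = 1 ∨ s % 3 = 2) with h | h <;> simp [Nat.mul_mod, h]
  have h := congrArg (· ^ s) hxy
  simp only [pow_piecewiseMonomial hcard hζ hps hx, pow_piecewiseMonomial hcard hζ hps hy] at h
  rw [← pow_pow_eq_self_of_pow_eq_one (pow_pow_three_eq_one hcard hx) hk,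
    ← pow_pow_eq_self_of_pow_eq_one (pow_pow_three_eq_one hcard hy) hk,
    mul_left_cancel₀ (pow_ne_zero s hζ.three_ne_zero) h]

theorem piecewiseMonomial_injective [CharP F p] [Fact p.Prime]
    (hcard : Fintype.card F = 3 * s + 1) (hζ : IsPrimitiveRoot ζ 3) (hs : ¬ 3 ∣ s)
    (hps : p % 3 = s % 3) : Injective (piecewiseMonomial s p ζ) := by
  have h := hζ.sq_add_self_add_one
  have hf0 : piecewiseMonomial s p ζ 0 = 0 :=
    piecewiseMonomial_zero (by omega) (Fact.out : p.Prime).ne_zero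
  intro x y hxy
  rcases eq_or_ne x 0 with rfl | hx
  · by_contra hy
    exact piecewiseMonomial_ne_zero hcard hζ hps (Ne.symm hy) (hxy.symm.trans hf0)
  rcases eq_or_ne y 0 with rfl | hy
  · exact absurd (hxy.trans hf0) (piecewiseMonomial_ne_zero hcard hζ hps hx)
  have hxys := pow_eq_pow_of_piecewiseMonomial_eq hcard hζ hs hps hx hy hxy
  have hc : (3 * ζ ^ 2 : F) ≠ 0 :=
    mul_ne_zero hζ.three_ne_zero (pow_ne_zero 2 (hζ.ne_zero (by norm_num)))
  rcases hζ.eq_one_or_eq_or_eq_sq (pow_pow_three_eq_one hcard hx) with hxs | hxs | hxs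
  · rw [piecewiseMonomial_of_pow_eq_one h hxs,
      piecewiseMonomial_of_pow_eq_one h (hxys ▸ hxs)] at hxy
    exact mul_left_cancel₀ hζ.three_ne_zero hxy
  · rw [piecewiseMonomial_of_pow_eq h hxs, piecewiseMonomial_of_pow_eq h (hxys ▸ hxs)] at hxy
    exact eq_of_pow_three_eq_of_pow_eq hζ hs hy (mul_left_cancel₀ hc hxy) hxys
  · rw [piecewiseMonomial_of_pow_eq_sq h hxs,
      piecewiseMonomial_of_pow_eq_sq h (hxys ▸ hxs)] at hxy
    exact frobenius_inj F p (mul_left_cancel₀ hc hxy)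

theorem not_injective_piecewiseMonomial_of_three_dvd (hcard : Fintype.card F = 3 * s + 1)
    (hζ : IsPrimitiveRoot ζ 3) (hs : 3 ∣ s) : ¬ Injective (piecewiseMonomial s p ζ) := by
  have h := hζ.sq_add_self_add_one
  obtain ⟨w, hw⟩ := exists_pow_eq_of_pow_three_eq_one hcard hζ.pow_eq_one
  have hζw : (ζ * w) ^ s = ζ := by rw [mul_pow, (hζ.pow_eq_one_iff_dvd s).2 hs, one_mul, hw]
  have hw0 : w ≠ 0 := by
    rintro rfl
    exact hζ.ne_zero (by norm_num)
      (by rw [← hw, zero_pow (pos_of_card_eq_three_mul_add_one hcard).ne'])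
  intro hinj
  have hζw_eq : ζ * w = w := hinj <| by
    rw [piecewiseMonomial_of_pow_eq h hζw, piecewiseMonomial_of_pow_eq h hw, mul_pow,
      hζ.pow_eq_one, one_mul]
  exact hζ.ne_one (by norm_num) ((mul_eq_right₀ hw0).1 hζw_eq)

theorem not_injective_piecewiseMonomial_of_three_dvd_add (hcard : Fintype.card F = 3 * s + 1)
    (hζ : IsPrimitiveRoot ζ 3) (hsp : 3 ∣ s + p) : ¬ Injective (piecewiseMonomial s p ζ) := by
  have h := hζ.sq_add_self_add_one
  obtain ⟨w, hw⟩ := exists_pow_eq_of_pow_three_eq_one hcard hζ.pow_eq_one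
  have hx : (w ^ 2) ^ s = ζ ^ 2 := by rw [← pow_mul, mul_comm, pow_mul, hw]
  have hy : (ζ ^ 2 * (w ^ 2) ^ p) ^ s = 1 :=
    calc _ = (ζ ^ (s + p)) ^ 2 := by
          rw [mul_pow, ← pow_mul (w ^ 2) p s, mul_comm p s, pow_mul, hx]; ring
      _ = 1 := by rw [(hζ.pow_eq_one_iff_dvd _).2 hsp, one_pow]
  intro hinj
  have hxy : ζ ^ 2 * (w ^ 2) ^ p = w ^ 2 := hinj <| by
    rw [piecewiseMonomial_of_pow_eq_one h hy, piecewiseMonomial_of_pow_eq_sq h hx]; ring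
  rw [hxy, hx] at hy
  exact hζ.pow_ne_one_of_pos_of_lt two_ne_zero (by norm_num) hy

end Finite

end Field

theorem stmt_16_general {F : Type*} [Field F] [Fintype F] (p n s : ℕ)
    (hp : p.Prime) [CharP F p] (hcard : Fintype.card F = p ^ n)
    (hmod : p ^ n % 3 = 1) (hs : s = (p ^ n - 1) / 3)
    (ζ : F) (hζ : orderOf ζ = 3) :
    Function.Bijective (fun x : F =>
      x * (x ^ s - ζ) * (x ^ s - ζ ^ 2) + x ^ 3 * (x ^ s - 1) * (x ^ s - ζ ^ 2) +
        ζ * x ^ p * (x ^ s - 1) * (x ^ s - ζ)) ↔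
      (p % 3 = 1 ∧ s % 3 = 1) ∨ (p % 3 = 2 ∧ s % 3 = 2) := by
  have : Fact p.Prime := ⟨hp⟩
  have hζ' : IsPrimitiveRoot ζ 3 := hζ ▸ IsPrimitiveRoot.orderOf ζ
  have hcard' : Fintype.card F = 3 * s + 1 := by omega
  have hp3 : ¬ 3 ∣ p := fun h ↦ by
    obtain rfl := ((Nat.prime_dvd_prime_iff_eq Nat.prime_three hp).1 h).symm
    exact hζ'.three_ne_zero (by exact_mod_cast CharP.cast_eq_zero F 3)
  change Bijective (piecewiseMonomial s p ζ) ↔ _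
  rw [← Finite.injective_iff_bijective]
  refine ⟨fun hinj ↦ ?_, fun _ ↦ piecewiseMonomial_injective hcard' hζ' (by omega) (by omega)⟩
  have h1 : ¬ 3 ∣ s := fun h ↦
    not_injective_piecewiseMonomial_of_three_dvd hcard' hζ' h hinj
  have h2 : ¬ 3 ∣ s + p := fun h ↦
    not_injective_piecewiseMonomial_of_three_dvd_add hcard' hζ' h hinj
  omega

theorem stmt_16 {F : Type*} [Field F] [Fintype F] (p n s : ℕ)
    (hp : p.Prime) [CharP F p] (hn : 0 < n) (hcard : Fintype.card F = p ^ n)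
    (hmod : p ^ n % 3 = 1) (hs : s = (p ^ n - 1) / 3)
    (ζ : F) (hζ : orderOf ζ = 3) :
    Function.Bijective (fun x : F =>
      x * (x ^ s - ζ) * (x ^ s - ζ ^ 2) + x ^ 3 * (x ^ s - 1) * (x ^ s - ζ ^ 2) +
        ζ * x ^ p * (x ^ s - 1) * (x ^ s - ζ)) ↔
      (p % 3 = 1 ∧ s % 3 = 1) ∨ (p % 3 = 2 ∧ s % 3 = 2) :=
  stmt_16_general p n s hp hcard hmod hs ζ hζ
end

section
/- Let q be a prime power, ℓ ∣ q-1, s = (q-1)/ℓ, γ a primitive element of F_q, ζ = γ^s, and C_i the cyclotomic cosets of index ℓ. Let g_0,...,g_{ℓ-1} ∈ F_q[x] and r_0,...,r_{ℓ-1} positive integers. Define P(0)=0 and P(x) = x^{r_i}·g_i(x^s)^ℓ for x ∈ C_i. Then P is a bijection of F_q if and only if {r_i·i mod ℓ : i=0,...,ℓ-1} is a complete set of residues modulo ℓ, and gcd(r_i, s)=1 and g_i(ζ^i) ≠ 0 for all i. -/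
/-!
On the coset `C_i = {x ≠ 0 | x ^ s = ζ ^ i}` the polynomial `g_i(x ^ s)` is the constant
`g_i(ζ ^ i)`, so `P` is the monomial `x ↦ c_i x ^ r_i` there, with `c_i = g_i(ζ ^ i) ^ ℓ`.
When `c_i ≠ 0` we have `c_i ^ s = 1`, so this monomial maps `C_i` into `C_{r_i i mod ℓ}`. Hence `P`
permutes the cosets exactly when `i ↦ r_i i` permutes the residues mod `ℓ`, and it is injective
on `C_i` exactly when `x ↦ x ^ r_i` is injective on the solutions of `x ^ s = ζ ^ i`, i.e. when no
`ω ≠ 1` satisfies `ω ^ s = ω ^ r_i = 1`, i.e. when `gcd(r_i, s) = 1`.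
-/

lemma isPrimitiveRoot_card_sub_one {G₀ : Type*} [CommGroupWithZero G₀] [Fintype G₀] {γ : G₀}
    (hγ0 : γ ≠ 0) (hγ : ∀ x : G₀, x ≠ 0 → ∃ k : ℕ, γ ^ k = x) :
    IsPrimitiveRoot γ (Fintype.card G₀ - 1) := by
  have hgen : ∀ u : G₀ˣ, u ∈ Subgroup.zpowers (Units.mk0 γ hγ0) := fun u => by
    obtain ⟨k, hk⟩ := hγ u u.ne_zero
    exact ⟨k, Units.ext (by simp [hk])⟩
  rw [← Nat.card_eq_fintype_card, ← Nat.card_units, ← orderOf_eq_card_of_forall_mem_zpowers hgen,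
    ← orderOf_units]
  exact IsPrimitiveRoot.orderOf γ

lemma eq_of_pow_eq_pow_of_coprime {G₀ : Type*} [CommGroupWithZero G₀] {x y : G₀} {m n : ℕ}
    (hmn : m.Coprime n) (hy : y ≠ 0) (hm : x ^ m = y ^ m) (hn : x ^ n = y ^ n) : x = y := by
  have hquot : (x / y) ^ m = 1 ∧ (x / y) ^ n = 1 := by
    simp only [div_pow, hm, hn, div_self (pow_ne_zero _ hy), and_self]
  exact (div_eq_one_iff_eq hy).mp ((pow_eq_one_iff_of_coprime hmn).mp hquot)

lemma IsPrimitiveRoot.exists_ne_one_pow_eq_one_of_dvd {M : Type*} [CommMonoid M] {γ : M} {n d : ℕ}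
    (hγ : IsPrimitiveRoot γ n) (hn : n ≠ 0) (hd : d ∣ n) (hd1 : 1 < d) :
    ∃ ω : M, ω ≠ 1 ∧ ∀ m, d ∣ m → ω ^ m = 1 := by
  have hω : IsPrimitiveRoot (γ ^ (n / d)) d := by
    simpa [Nat.div_div_self hd hn] using
      hγ.pow_of_dvd (Nat.div_ne_zero_iff_of_dvd hd |>.mpr ⟨hn, by omega⟩) (Nat.div_dvd_of_dvd hd)
  exact ⟨_, hω.ne_one hd1, fun m hm => (hω.pow_eq_one_iff_dvd m).mpr hm⟩

lemma IsPrimitiveRoot.pow_eq_pow_iff_modEq {M : Type*} [CommMonoid M] {ζ : M} {k : ℕ}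
    (h : IsPrimitiveRoot ζ k) (hk : k ≠ 0) {a b : ℕ} : ζ ^ a = ζ ^ b ↔ a ≡ b [MOD k] := by
  rw [h.eq_orderOf]
  exact (h.isOfFinOrder hk).pow_eq_pow_iff_modEq

lemma Nat.injOn_mod_of_forall_exists_modEq {ℓ : ℕ} {f : ℕ → ℕ}
    (h : ∀ k < ℓ, ∃ i < ℓ, f i ≡ k [MOD ℓ]) : Set.InjOn (fun i => f i % ℓ) (Set.Iio ℓ) := by
  have hmaps : Set.MapsTo (fun i => f i % ℓ) (Set.Iio ℓ) (Set.Iio ℓ) :=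
    fun i hi => Nat.mod_lt _ (Nat.zero_lt_of_lt hi)
  have hsurj : Set.SurjOn (fun i => f i % ℓ) (Set.Iio ℓ) (Set.Iio ℓ) := fun k hk => by
    obtain ⟨i, hi, hik⟩ := h k hk
    exact ⟨i, hi, Eq.trans hik (Nat.mod_eq_of_lt hk)⟩
  exact ((Set.finite_Iio ℓ).surjOn_iff_bijOn_of_mapsTo hmaps).mp hsurj |>.injOn

section PiecewiseMonomial

variable {F : Type*} [Field F] {s ℓ : ℕ} {γ : F} {c : ℕ → F} {r : ℕ → ℕ} {P : F → F}

def EqMonomialOnCosets (γ : F) (s ℓ : ℕ) (r : ℕ → ℕ) (c : ℕ → F) (P : F → F) : Prop :=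
  ∀ i < ℓ, ∀ x : F, x ≠ 0 → x ^ s = (γ ^ s) ^ i → P x = x ^ r i * c i

lemma exists_pow_eq_pow_of_ne_zero [Fintype F] (hγ : IsPrimitiveRoot γ (s * ℓ))
    (hq : s * ℓ = Fintype.card F - 1) {x : F} (hx : x ≠ 0) : ∃ i < ℓ, x ^ s = (γ ^ s) ^ i := by
  have hpos : 0 < s * ℓ := hq ▸ Nat.sub_pos_of_lt Fintype.one_lt_card
  have hζ : IsPrimitiveRoot (γ ^ s) ℓ := hγ.pow hpos rfl
  have : NeZero ℓ := ⟨right_ne_zero_of_mul hpos.ne'⟩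
  obtain ⟨i, hi, hxi⟩ := hζ.eq_pow_of_pow_eq_one (ξ := x ^ s)
    (by rw [← pow_mul, hq, FiniteField.pow_card_sub_one_eq_one x hx])
  exact ⟨i, hi, hxi.symm⟩

lemma pow_apply_eq_of_pow_eq (hP : EqMonomialOnCosets γ s ℓ r c P) {i : ℕ} (hi : i < ℓ)
    (hc : c i ^ s = 1) {x : F} (hx : x ≠ 0) (hxi : x ^ s = (γ ^ s) ^ i) :
    P x ^ s = (γ ^ s) ^ (r i * i) := by
  rw [hP i hi x hx hxi, mul_pow, hc, mul_one, ← pow_mul, mul_comm, pow_mul, hxi, ← pow_mul,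
    mul_comm]

lemma ne_zero_of_injective (hP0 : P 0 = 0) (hP : EqMonomialOnCosets γ s ℓ r c P)
    (hinj : P.Injective) (hγ0 : γ ≠ 0) {i : ℕ} (hi : i < ℓ) : c i ≠ 0 := by
  intro hci
  refine pow_ne_zero i hγ0 (hinj ?_)
  rw [hP i hi _ (pow_ne_zero i hγ0) (pow_right_comm γ i s), hci, mul_zero, hP0]

lemma coprime_of_injective (hP : EqMonomialOnCosets γ s ℓ r c P)
    (hinj : P.Injective) (hγ : IsPrimitiveRoot γ (s * ℓ)) (hsℓ : s * ℓ ≠ 0) {i : ℕ}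
    (hi : i < ℓ) : (r i).Coprime s := by
  by_contra hcop
  have hd : 1 < (r i).gcd s := by
    have := Nat.gcd_pos_of_pos_right (r i) (Nat.pos_of_ne_zero (left_ne_zero_of_mul hsℓ))
    unfold Nat.Coprime at hcop
    omega
  -- a nontrivial `ω` with `ω ^ s = ω ^ r i = 1` glues two points of `C_i` with the same image
  obtain ⟨ω, hω1, hω⟩ := hγ.exists_ne_one_pow_eq_one_of_dvd hsℓ
    ((Nat.gcd_dvd_right _ _).trans (dvd_mul_right s ℓ)) hd
  have hωs := hω s (Nat.gcd_dvd_right _ _)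
  have hωr := hω (r i) (Nat.gcd_dvd_left _ _)
  have hγ0 : γ ^ i ≠ 0 := pow_ne_zero i (hγ.ne_zero hsℓ)
  have hω0 : ω ≠ 0 := by rintro rfl; simp [zero_pow (left_ne_zero_of_mul hsℓ)] at hωs
  have hxi : (γ ^ i) ^ s = (γ ^ s) ^ i := pow_right_comm γ i s
  have hyi : (γ ^ i * ω) ^ s = (γ ^ s) ^ i := by rw [mul_pow, hωs, mul_one, hxi]
  refine hω1 (mul_eq_left₀ hγ0 |>.mp (hinj ?_))
  rw [hP i hi _ (mul_ne_zero hγ0 hω0) hyi, hP i hi _ hγ0 hxi, mul_pow, hωr, mul_one]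

lemma apply_ne_zero [Fintype F] (hP : EqMonomialOnCosets γ s ℓ r c P)
    (hγ : IsPrimitiveRoot γ (s * ℓ)) (hq : s * ℓ = Fintype.card F - 1)
    (hc : ∀ i < ℓ, c i ≠ 0) {x : F} (hx : x ≠ 0) : P x ≠ 0 := by
  obtain ⟨i, hi, hxi⟩ := exists_pow_eq_pow_of_ne_zero hγ hq hx
  rw [hP i hi x hx hxi]
  exact mul_ne_zero (pow_ne_zero _ hx) (hc i hi)

lemma exists_modEq_of_surjective [Fintype F] (hP0 : P 0 = 0)
    (hP : EqMonomialOnCosets γ s ℓ r c P) (hsurj : P.Surjective)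
    (hγ : IsPrimitiveRoot γ (s * ℓ)) (hq : s * ℓ = Fintype.card F - 1)
    (hc : ∀ i < ℓ, c i ^ s = 1) {k : ℕ} (hk : k < ℓ) : ∃ i < ℓ, r i * i ≡ k [MOD ℓ] := by
  have hpos : 0 < s * ℓ := hq ▸ Nat.sub_pos_of_lt Fintype.one_lt_card
  have hζ : IsPrimitiveRoot (γ ^ s) ℓ := hγ.pow hpos rfl
  obtain ⟨x, hx⟩ := hsurj (γ ^ k)
  have hx0 : x ≠ 0 := by
    rintro rfl
    exact pow_ne_zero k (hγ.ne_zero hpos.ne') (hx.symm.trans hP0)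
  obtain ⟨i, hi, hxi⟩ := exists_pow_eq_pow_of_ne_zero hγ hq hx0
  have hPx := pow_apply_eq_of_pow_eq hP hi (hc i hi) hx0 hxi
  rw [hx, pow_right_comm] at hPx
  exact ⟨i, hi, (hζ.pow_eq_pow_iff_modEq (by omega)).mp hPx.symm⟩

lemma injective_of_modEq_of_coprime [Fintype F] (hP0 : P 0 = 0)
    (hP : EqMonomialOnCosets γ s ℓ r c P)
    (hγ : IsPrimitiveRoot γ (s * ℓ)) (hq : s * ℓ = Fintype.card F - 1)
    (hres : ∀ k < ℓ, ∃ i < ℓ, r i * i ≡ k [MOD ℓ]) (hcop : ∀ i < ℓ, (r i).Coprime s)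
    (hc0 : ∀ i < ℓ, c i ≠ 0) (hc : ∀ i < ℓ, c i ^ s = 1) : P.Injective := by
  have hζ : IsPrimitiveRoot (γ ^ s) ℓ :=
    hγ.pow (hq ▸ Nat.sub_pos_of_lt Fintype.one_lt_card) rfl
  have hP0' : ∀ x, P x = 0 → x = 0 := fun x hx => by_contra (apply_ne_zero hP hγ hq hc0 · hx)
  intro x y hxy
  by_cases hx : x = 0
  · rw [hx, hP0] at hxy
    exact hx.trans (hP0' y hxy.symm).symm
  have hy : y ≠ 0 := fun hy => hx (hP0' x (hxy.trans (hy ▸ hP0)))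
  obtain ⟨i, hi, hxi⟩ := exists_pow_eq_pow_of_ne_zero hγ hq hx
  obtain ⟨j, hj, hyj⟩ := exists_pow_eq_pow_of_ne_zero hγ hq hy
  have hij : i = j := by
    refine Nat.injOn_mod_of_forall_exists_modEq hres hi hj
      ((hζ.pow_eq_pow_iff_modEq (by omega)).mp ?_)
    rw [← pow_apply_eq_of_pow_eq hP hi (hc i hi) hx hxi,
      ← pow_apply_eq_of_pow_eq hP hj (hc j hj) hy hyj, hxy]
  subst hij
  refine eq_of_pow_eq_pow_of_coprime (hcop i hi) hy (mul_right_cancel₀ (hc0 i hi) ?_)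
    (hxi.trans hyj.symm)
  rwa [← hP i hi x hx hxi, ← hP i hi y hy hyj]

theorem bijective_iff_of_eqMonomialOnCosets [Fintype F] (hP0 : P 0 = 0)
    (hP : EqMonomialOnCosets γ s ℓ r c P)
    (hγ : IsPrimitiveRoot γ (s * ℓ)) (hq : s * ℓ = Fintype.card F - 1)
    (hc : ∀ i < ℓ, c i ≠ 0 → c i ^ s = 1) :
    P.Bijective ↔
      (∀ k < ℓ, ∃ i < ℓ, r i * i ≡ k [MOD ℓ]) ∧ ∀ i < ℓ, (r i).Coprime s ∧ c i ≠ 0 := by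
  have hsℓ : s * ℓ ≠ 0 := hq ▸ (Nat.sub_pos_of_lt Fintype.one_lt_card).ne'
  constructor
  · intro hbij
    have hc0 : ∀ i < ℓ, c i ≠ 0 := fun i hi =>
      ne_zero_of_injective hP0 hP hbij.1 (hγ.ne_zero hsℓ) hi
    exact ⟨fun k hk => exists_modEq_of_surjective hP0 hP hbij.2 hγ hq
      (fun i hi => hc i hi (hc0 i hi)) hk,
      fun i hi => ⟨coprime_of_injective hP hbij.1 hγ hsℓ hi, hc0 i hi⟩⟩
  · rintro ⟨hres, hci⟩
    refine Finite.injective_iff_bijective.mp (injective_of_modEq_of_coprime hP0 hP hγ hq hres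
      (fun i hi => (hci i hi).1) (fun i hi => (hci i hi).2) (fun i hi => hc i hi (hci i hi).2))

end PiecewiseMonomial

theorem stmt_19_general {F : Type*} [Field F] [Fintype F] (q ℓ s : ℕ)
    (hq : Fintype.card F = q) (hℓpos : 0 < ℓ) (hℓ : ℓ ∣ q - 1) (hs : s = (q - 1) / ℓ)
    (γ : F) (hγ0 : γ ≠ 0) (hγ : ∀ x : F, x ≠ 0 → ∃ k : ℕ, γ ^ k = x)
    (g : ℕ → Polynomial F) (r : ℕ → ℕ)
    (P : F → F) (hP0 : P 0 = 0)
    (hP : ∀ i < ℓ, ∀ x : F, x ≠ 0 → x ^ s = (γ ^ s) ^ i →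
      P x = x ^ (r i) * ((g i).eval (x ^ s)) ^ ℓ) :
    Function.Bijective P ↔
      (∀ k < ℓ, ∃ i < ℓ, r i * i ≡ k [MOD ℓ]) ∧
        ∀ i < ℓ, Nat.gcd (r i) s = 1 ∧ (g i).eval ((γ ^ s) ^ i) ≠ 0 := by
  have hsℓ : s * ℓ = Fintype.card F - 1 := by rw [hs, hq]; exact Nat.div_mul_cancel hℓ
  have hγs : IsPrimitiveRoot γ (s * ℓ) := hsℓ ▸ isPrimitiveRoot_card_sub_one hγ0 hγ
  -- on `C_i` the factor `g_i(x ^ s) ^ ℓ` is the constant `c_i = g_i(ζ ^ i) ^ ℓ`, an `ℓ`-th power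
  set c : ℕ → F := fun i => (g i).eval ((γ ^ s) ^ i) ^ ℓ
  have hc : ∀ i < ℓ, c i ≠ 0 → c i ^ s = 1 := fun i _ hci => by
    rw [← pow_mul, mul_comm, hsℓ]
    exact FiniteField.pow_card_sub_one_eq_one _ (pow_ne_zero_iff hℓpos.ne' |>.mp hci)
  have hPc : EqMonomialOnCosets γ s ℓ r c P := fun i hi x hx hxi => by
    rw [hP i hi x hx hxi, hxi]
  rw [bijective_iff_of_eqMonomialOnCosets hP0 hPc hγs hsℓ hc]
  simp only [c, ne_eq, pow_eq_zero_iff hℓpos.ne', Nat.Coprime]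

theorem stmt_19 {F : Type*} [Field F] [Fintype F] (q ℓ s : ℕ)
    (hq : Fintype.card F = q) (hℓpos : 0 < ℓ) (hℓ : ℓ ∣ q - 1) (hs : s = (q - 1) / ℓ)
    (γ : F) (hγ0 : γ ≠ 0) (hγ : ∀ x : F, x ≠ 0 → ∃ k : ℕ, γ ^ k = x)
    (g : ℕ → Polynomial F) (r : ℕ → ℕ) (hr : ∀ i < ℓ, 0 < r i)
    (P : F → F) (hP0 : P 0 = 0)
    (hP : ∀ i < ℓ, ∀ x : F, x ≠ 0 → x ^ s = (γ ^ s) ^ i →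
      P x = x ^ (r i) * ((g i).eval (x ^ s)) ^ ℓ) :
    Function.Bijective P ↔
      (∀ k < ℓ, ∃ i < ℓ, r i * i ≡ k [MOD ℓ]) ∧
        ∀ i < ℓ, Nat.gcd (r i) s = 1 ∧ (g i).eval ((γ ^ s) ^ i) ≠ 0 :=
  stmt_19_general q ℓ s hq hℓpos hℓ hs γ hγ0 hγ g r P hP0 hP
end
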